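/- arXiv:2105.06765 — 4 statements merged into one kernel-verified Lean document; each statement's English description precedes it below -/
import Mathlib

section
/- Let F be a steerable image family of radius n and angular bandlimit V, and define S₂[u] := (1/(4n²))·(1/2π)∫₀^{2π} Σ_{ℓ∈ℤ²} F_φ[ℓ]F_φ[ℓ+u] dφ. Then for every k ∈ ℤ²: (i) Ŝ₂[k] := Σ_{u∈ℤ²} S₂[u]·e^{−2πi(u·k)/(4n)} = (1/(4n²))·(1/2π)∫₀^{2π} |F̂_φ[k]|² dφ, where F̂_φ[k] := Σ_{ℓ∈ℤ²} F_φ[ℓ]·e^{−2πi(ℓ·k)/(4n)}; and (ii) Ŝ₂[k] = (1/(4n²))·(1/(4V))·Σ_{ν=0}^{4V−1} |F̂_{φ_ν}[k]|², where φ_ν := 2πν/(4V). -/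
/-! Every `F_φ` is supported in the box `[-n, n]²`, so all sums over `ℤ²` are finite. For a
finitely supported real `f` and a unitary character `χ`, summing the autocorrelation of `f`
against `χ` gives `|Σ f χ|²` (Wiener–Khinchin); integrating in `φ` and swapping the finite sums
with the integral gives (i).

For (ii), `F̂_φ[k]` is a trigonometric polynomial in `φ` with frequencies in `[-V, V]`, so
`|F̂_φ[k]|²` has frequencies in `[-2V, 2V]`. The `N`-point equispaced rule on `[0, 2π]` is exact
on `e^{imφ}` whenever `|m| < N`: both sides vanish unless `m = 0`, the discrete side because
`e^{2πim/N}` is then an `N`-th root of unity different from `1`. -/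

open Real MeasureTheory intervalIntegral

noncomputable section

/-- A steerable image family of radius `n` and angular bandlimit `V`. -/
def Steerable (n V : ℕ) (F : ℝ → ℤ × ℤ → ℝ) (g : ℤ → ℤ × ℤ → ℂ) : Prop :=
  (∀ ν : ℤ, ∀ ℓ : ℤ × ℤ, (n : ℤ) < max |ℓ.1| |ℓ.2| → g ν ℓ = 0) ∧
  (∀ φ : ℝ, ∀ ℓ : ℤ × ℤ,
    (F φ ℓ : ℂ) =
      ∑ ν ∈ Finset.Icc (-(V : ℤ)) (V : ℤ), g ν ℓ * Complex.exp (Complex.I * (ν : ℂ) * (φ : ℂ)))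

/-- The DFT phase `e^{−2πi(ℓ·k)/(4n)}`. -/
def dftPhase (n : ℕ) (ℓ k : ℤ × ℤ) : ℂ :=
  Complex.exp (-(2 * (π : ℂ) * Complex.I * ((ℓ.1 * k.1 + ℓ.2 * k.2 : ℤ) : ℂ)) / (4 * (n : ℂ)))

open scoped Pointwise ComplexConjugate

section Autocorrelation

variable {G : Type*} [AddCommGroup G] {s : Finset G}

lemma sum_sub_self_shift_eq_sum [DecidableEq G] {M : Type*} [AddCommMonoid M] {h : G → M}
    (hh : ∀ x ∉ s, h x = 0) {ℓ : G} (hℓ : ℓ ∈ s) :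
    ∑ u ∈ s - s, h (ℓ + u) = ∑ x ∈ s, h x := by
  refine (Finset.sum_map (s - s) (addLeftEmbedding ℓ) h).symm.trans
    (Finset.sum_subset (fun x hx => ?_) fun x _ hx => hh x hx).symm
  exact Finset.mem_map.2 ⟨x - ℓ, Finset.sub_mem_sub hx hℓ, add_sub_cancel ℓ x⟩

lemma sum_mul_shift_eq_zero_of_notMem_sub [DecidableEq G] {f : G → ℝ}
    (hf : ∀ x ∉ s, f x = 0) {u : G} (hu : u ∉ s - s) : ∑ ℓ ∈ s, f ℓ * f (ℓ + u) = 0 := by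
  refine Finset.sum_eq_zero fun ℓ hℓ => ?_
  have : ℓ + u ∉ s := fun h => hu (by simpa using Finset.sub_mem_sub h hℓ)
  rw [hf _ this, mul_zero]

-- The finite Wiener–Khinchin identity.
lemma sum_autocorrelation_mul_addChar [DecidableEq G] {f : G → ℝ} (hf : ∀ x ∉ s, f x = 0)
    (χ : AddChar G ℂ) (hχ : ∀ x, ‖χ x‖ = 1) :
    ∑ u ∈ s - s, ((∑ ℓ ∈ s, f ℓ * f (ℓ + u) : ℝ) : ℂ) * χ u =
      ((‖∑ ℓ ∈ s, (f ℓ : ℂ) * χ ℓ‖ ^ 2 : ℝ) : ℂ) := by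
  have hconj : conj (∑ ℓ ∈ s, (f ℓ : ℂ) * χ ℓ) = ∑ ℓ ∈ s, (f ℓ : ℂ) * χ (-ℓ) := by
    simp [map_sum, AddChar.map_neg_eq_inv, Complex.inv_eq_conj (hχ _)]
  rw [Complex.ofReal_pow, ← Complex.conj_mul', hconj, Finset.sum_mul]
  push_cast
  simp only [Finset.sum_mul]
  rw [Finset.sum_comm]
  refine Finset.sum_congr rfl fun ℓ hℓ => ?_
  rw [← sum_sub_self_shift_eq_sum (fun x hx => by simp [hf x hx]) hℓ, Finset.mul_sum]
  refine Finset.sum_congr rfl fun u _ => ?_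
  rw [show χ u = χ (-ℓ) * χ (ℓ + u) by rw [← AddChar.map_add_eq_mul, neg_add_cancel_left]]
  ring

lemma tsum_integral_autocorrelation_mul_addChar {f : ℝ → G → ℝ}
    (hf : ∀ φ, ∀ x ∉ s, f φ x = 0) (hcont : ∀ x, Continuous fun φ => f φ x)
    (χ : AddChar G ℂ) (hχ : ∀ x, ‖χ x‖ = 1) (a b : ℝ) :
    ∑' u, ((∫ φ in a..b, ∑' ℓ, f φ ℓ * f φ (ℓ + u) : ℝ) : ℂ) * χ u =
      ((∫ φ in a..b, ‖∑' ℓ, (f φ ℓ : ℂ) * χ ℓ‖ ^ 2 : ℝ) : ℂ) := by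
  classical
  have hauto : ∀ φ u, ∑' ℓ, f φ ℓ * f φ (ℓ + u) = ∑ ℓ ∈ s, f φ ℓ * f φ (ℓ + u) :=
    fun φ u => tsum_eq_sum fun ℓ hℓ => by rw [hf φ ℓ hℓ, zero_mul]
  have hhat : ∀ φ, ∑' ℓ, (f φ ℓ : ℂ) * χ ℓ = ∑ ℓ ∈ s, (f φ ℓ : ℂ) * χ ℓ :=
    fun φ => tsum_eq_sum fun ℓ hℓ => by rw [hf φ ℓ hℓ, Complex.ofReal_zero, zero_mul]
  simp_rw [hauto, hhat]
  rw [tsum_eq_sum (s := s - s) fun u hu => by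
    simp [sum_mul_shift_eq_zero_of_notMem_sub (hf _) hu]]
  simp_rw [← intervalIntegral.integral_ofReal, ← intervalIntegral.integral_mul_const]
  rw [← intervalIntegral.integral_finsetSum fun u _ => by
    exact Continuous.intervalIntegrable (by fun_prop) _ _]
  simp_rw [sum_autocorrelation_mul_addChar (hf _) χ hχ]

end Autocorrelation

lemma integral_exp_int_mul_I (m : ℤ) :
    ∫ φ in (0 : ℝ)..2 * π, Complex.exp (Complex.I * m * φ) =
      if m = 0 then (2 * π : ℂ) else 0 := by
  split_ifs with hm
  · simp [hm]
  · have hc : Complex.I * m ≠ 0 := mul_ne_zero Complex.I_ne_zero (by exact_mod_cast hm)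
    rw [integral_exp_mul_complex hc, sub_eq_zero_of_eq, zero_div]
    rw [Complex.ofReal_zero, mul_zero, Complex.exp_zero, ← Complex.exp_int_mul_two_pi_mul_I m]
    push_cast
    ring_nf

lemma sum_exp_int_mul_I_equispaced {N : ℕ} (hN : N ≠ 0) {m : ℤ} (hm : |m| < N) :
    ∑ j ∈ Finset.range N, Complex.exp (Complex.I * m * ((2 * π * j / N : ℝ) : ℂ)) =
      if m = 0 then (N : ℂ) else 0 := by
  split_ifs with hm0
  · simp [hm0]
  have hζ := Complex.isPrimitiveRoot_exp N hN
  have hω : (Complex.exp (2 * π * Complex.I / N) ^ m) ≠ 1 := fun h =>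
    hm0 (Int.eq_zero_of_abs_lt_dvd ((hζ.zpow_eq_one_iff_dvd m).1 h) hm)
  have hωN : (Complex.exp (2 * π * Complex.I / N) ^ m) ^ N = 1 := by
    rw [← zpow_natCast, ← zpow_mul, mul_comm m, zpow_mul, zpow_natCast, hζ.pow_eq_one, one_zpow]
  have hterm (j : ℕ) : Complex.exp (Complex.I * m * ((2 * π * j / N : ℝ) : ℂ)) =
      (Complex.exp (2 * π * Complex.I / N) ^ m) ^ j := by
    rw [← Complex.exp_int_mul, ← Complex.exp_nat_mul]
    push_cast
    ring_nf
  simp_rw [hterm, geom_sum_eq hω, hωN, sub_self, zero_div]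

lemma integral_exp_int_mul_I_eq_riemann_sum {N : ℕ} (hN : N ≠ 0) {m : ℤ} (hm : |m| < N) :
    ∫ φ in (0 : ℝ)..2 * π, Complex.exp (Complex.I * m * φ) =
      ((2 * π / N : ℝ) : ℂ) *
        ∑ j ∈ Finset.range N, Complex.exp (Complex.I * m * ((2 * π * j / N : ℝ) : ℂ)) := by
  rw [integral_exp_int_mul_I, sum_exp_int_mul_I_equispaced hN hm]
  split_ifs
  · push_cast
    field_simp
  · rw [mul_zero]

lemma ofReal_norm_sum_exp_sq (s : Finset ℤ) (a : ℤ → ℂ) (φ : ℝ) :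
    (‖∑ ν ∈ s, a ν * Complex.exp (Complex.I * ν * φ)‖ : ℂ) ^ 2 =
      ∑ μ ∈ s, ∑ ν ∈ s, conj (a μ) * a ν * Complex.exp (Complex.I * (ν - μ : ℤ) * φ) := by
  rw [← Complex.conj_mul', map_sum, Finset.sum_mul_sum]
  refine Finset.sum_congr rfl fun μ _ => Finset.sum_congr rfl fun ν _ => ?_
  rw [map_mul, ← Complex.exp_conj, mul_mul_mul_comm, ← Complex.exp_add]
  simp only [map_mul, Complex.conj_I, Complex.conj_ofReal, map_intCast]
  push_cast
  ring_nf

lemma integral_norm_sum_exp_sq_eq_riemann_sum {N : ℕ} (hN : N ≠ 0) {s : Finset ℤ}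
    (hs : ∀ μ ∈ s, ∀ ν ∈ s, |ν - μ| < N) (a : ℤ → ℂ) :
    ∫ φ in (0 : ℝ)..2 * π, ‖∑ ν ∈ s, a ν * Complex.exp (Complex.I * ν * φ)‖ ^ 2 =
      2 * π / N * ∑ j ∈ Finset.range N,
        ‖∑ ν ∈ s, a ν * Complex.exp (Complex.I * ν * ((2 * π * j / N : ℝ) : ℂ))‖ ^ 2 := by
  apply Complex.ofReal_injective
  rw [← intervalIntegral.integral_ofReal]
  simp only [Complex.ofReal_pow, Complex.ofReal_mul, Complex.ofReal_sum, ofReal_norm_sum_exp_sq]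
  rw [intervalIntegral.integral_finsetSum fun μ _ =>
    Continuous.intervalIntegrable (by fun_prop) _ _]
  have hquad : ∀ μ ∈ s, ∀ ν ∈ s,
      ∫ φ in (0 : ℝ)..2 * π, conj (a μ) * a ν * Complex.exp (Complex.I * (ν - μ : ℤ) * φ) =
        ((2 * π / N : ℝ) : ℂ) * ∑ j ∈ Finset.range N, conj (a μ) * a ν *
          Complex.exp (Complex.I * (ν - μ : ℤ) * ((2 * π * j / N : ℝ) : ℂ)) := fun μ hμ ν hν => by
    rw [intervalIntegral.integral_const_mul,
      integral_exp_int_mul_I_eq_riemann_sum hN (hs μ hμ ν hν), ← Finset.mul_sum]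
    ring
  rw [Finset.sum_congr rfl fun μ hμ => (intervalIntegral.integral_finsetSum fun ν _ =>
    Continuous.intervalIntegrable (by fun_prop) _ _).trans (Finset.sum_congr rfl (hquad μ hμ))]
  simp only [Finset.mul_sum]
  exact (Finset.sum_congr rfl fun _ _ => Finset.sum_comm).trans Finset.sum_comm

namespace Steerable

variable {n V : ℕ} {F : ℝ → ℤ × ℤ → ℝ} {g : ℤ → ℤ × ℤ → ℂ}

lemma apply_eq_zero_of_notMem (hF : Steerable n V F g) (φ : ℝ) {ℓ : ℤ × ℤ}
    (hℓ : ℓ ∉ Finset.Icc (-(n : ℤ), -(n : ℤ)) (n, n)) : F φ ℓ = 0 := by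
  have hout : (n : ℤ) < max |ℓ.1| |ℓ.2| := by
    by_contra! h
    rw [max_le_iff, abs_le, abs_le] at h
    exact hℓ (Finset.mem_Icc.2 ⟨⟨h.1.1, h.2.1⟩, h.1.2, h.2.2⟩)
  exact_mod_cast (hF.2 φ ℓ).trans (Finset.sum_eq_zero fun ν _ => by rw [hF.1 ν ℓ hout, zero_mul])

lemma continuous_apply (hF : Steerable n V F g) (ℓ : ℤ × ℤ) : Continuous fun φ => F φ ℓ := by
  have h : Continuous fun φ : ℝ => (F φ ℓ : ℂ) := by
    simp_rw [hF.2 _ ℓ]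
    fun_prop
  exact Complex.continuous_re.comp h

lemma tsum_mul_eq_sum_exp (hF : Steerable n V F g) (c : ℤ × ℤ → ℂ) (φ : ℝ) :
    ∑' ℓ, (F φ ℓ : ℂ) * c ℓ =
      ∑ ν ∈ Finset.Icc (-(V : ℤ)) V,
        (∑ ℓ ∈ Finset.Icc (-(n : ℤ), -(n : ℤ)) (n, n), g ν ℓ * c ℓ) *
          Complex.exp (Complex.I * ν * φ) := by
  rw [tsum_eq_sum fun ℓ hℓ => by
    rw [hF.apply_eq_zero_of_notMem φ hℓ, Complex.ofReal_zero, zero_mul]]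
  simp_rw [hF.2 φ, Finset.sum_mul]
  rw [Finset.sum_comm]
  exact Finset.sum_congr rfl fun ν _ => Finset.sum_congr rfl fun ℓ _ => by ring

end Steerable

def dftPhaseChar (n : ℕ) (k : ℤ × ℤ) : AddChar (ℤ × ℤ) ℂ where
  toFun ℓ := dftPhase n ℓ k
  map_zero_eq_one' := by simp [dftPhase]
  map_add_eq_mul' a b := by
    rw [dftPhase, dftPhase, dftPhase, ← Complex.exp_add, Prod.fst_add, Prod.snd_add]
    push_cast
    ring_nf

lemma dftPhaseChar_apply (n : ℕ) (k ℓ : ℤ × ℤ) : dftPhaseChar n k ℓ = dftPhase n ℓ k := rfl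

lemma norm_dftPhase (n : ℕ) (ℓ k : ℤ × ℤ) : ‖dftPhase n ℓ k‖ = 1 := by
  simp [dftPhase, Complex.norm_exp, Complex.div_re]

theorem stmt_4_general (n V : ℕ) (hV : 1 ≤ V)
    (F : ℝ → ℤ × ℤ → ℝ) (g : ℤ → ℤ × ℤ → ℂ) (hF : Steerable n V F g)
    (S₂ : ℤ × ℤ → ℝ)
    (hS₂ : ∀ u : ℤ × ℤ, S₂ u =
      1 / (4 * (n : ℝ) ^ 2) *
        (1 / (2 * π) * ∫ φ in (0:ℝ)..(2 * π), ∑' ℓ : ℤ × ℤ, F φ ℓ * F φ (ℓ + u)))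
    (Fhat : ℝ → ℤ × ℤ → ℂ)
    (hFhat : ∀ φ : ℝ, ∀ k : ℤ × ℤ,
      Fhat φ k = ∑' ℓ : ℤ × ℤ, (F φ ℓ : ℂ) * dftPhase n ℓ k) :
    ∀ k : ℤ × ℤ,
      (∑' u : ℤ × ℤ, (S₂ u : ℂ) * dftPhase n u k) =
        ((1 / (4 * (n : ℝ) ^ 2) *
          (1 / (2 * π) * ∫ φ in (0:ℝ)..(2 * π), ‖Fhat φ k‖ ^ 2) : ℝ) : ℂ) ∧
      (∑' u : ℤ × ℤ, (S₂ u : ℂ) * dftPhase n u k) =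
        ((1 / (4 * (n : ℝ) ^ 2) *
          (1 / (4 * (V : ℝ)) * ∑ ν ∈ Finset.range (4 * V),
            ‖Fhat (2 * π * (ν : ℝ) / (4 * (V : ℝ))) k‖ ^ 2) : ℝ) : ℂ) := by
  intro k
  have wiener_khinchin := tsum_integral_autocorrelation_mul_addChar
    (fun φ _ hℓ => hF.apply_eq_zero_of_notMem φ hℓ) hF.continuous_apply (dftPhaseChar n k)
    (norm_dftPhase n · k) 0 (2 * π)
  have part_one : (∑' u, (S₂ u : ℂ) * dftPhase n u k) =
      ((1 / (4 * (n : ℝ) ^ 2) *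
        (1 / (2 * π) * ∫ φ in (0:ℝ)..(2 * π), ‖Fhat φ k‖ ^ 2) : ℝ) : ℂ) := by
    simp only [dftPhaseChar_apply, ← hFhat] at wiener_khinchin
    simp only [hS₂, Complex.ofReal_mul, mul_assoc, tsum_mul_left, wiener_khinchin]
  have quadrature : ∫ φ in (0:ℝ)..(2 * π), ‖Fhat φ k‖ ^ 2 =
      2 * π / (4 * V) * ∑ ν ∈ Finset.range (4 * V),
        ‖Fhat (2 * π * (ν : ℝ) / (4 * (V : ℝ))) k‖ ^ 2 := by
    simp_rw [hFhat, hF.tsum_mul_eq_sum_exp]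
    have h := integral_norm_sum_exp_sq_eq_riemann_sum (N := 4 * V) (by omega)
      (s := Finset.Icc (-(V : ℤ)) V) (fun μ hμ ν hν => by
        rw [Finset.mem_Icc] at hμ hν; rw [abs_lt]; push_cast; omega)
      (fun ν => ∑ ℓ ∈ Finset.Icc (-(n : ℤ), -(n : ℤ)) (n, n), g ν ℓ * dftPhase n ℓ k)
    simpa only [Nat.cast_mul, Nat.cast_ofNat] using h
  refine ⟨part_one, part_one.trans ?_⟩
  rw [quadrature]
  have hV₀ : (V : ℝ) ≠ 0 := by positivity
  field_simp

/-- the DFT of the rotationally-averaged second-order autocorrelation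
`S₂` equals `(1/(4n²))·(1/2π)∫₀^{2π}|F̂_φ[k]|² dφ`, and it is computed exactly by the
`4V`-point quadrature `(1/(4n²))·(1/(4V))·Σ_{ν=0}^{4V−1}|F̂_{2πν/(4V)}[k]|²`. -/
theorem stmt_4 (n V : ℕ) (hn : 1 ≤ n) (hV : 1 ≤ V)
    (F : ℝ → ℤ × ℤ → ℝ) (g : ℤ → ℤ × ℤ → ℂ) (hF : Steerable n V F g)
    (S₂ : ℤ × ℤ → ℝ)
    (hS₂ : ∀ u : ℤ × ℤ, S₂ u =
      1 / (4 * (n : ℝ) ^ 2) *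
        (1 / (2 * π) * ∫ φ in (0:ℝ)..(2 * π), ∑' ℓ : ℤ × ℤ, F φ ℓ * F φ (ℓ + u)))
    (Fhat : ℝ → ℤ × ℤ → ℂ)
    (hFhat : ∀ φ : ℝ, ∀ k : ℤ × ℤ,
      Fhat φ k = ∑' ℓ : ℤ × ℤ, (F φ ℓ : ℂ) * dftPhase n ℓ k) :
    ∀ k : ℤ × ℤ,
      (∑' u : ℤ × ℤ, (S₂ u : ℂ) * dftPhase n u k) =
        ((1 / (4 * (n : ℝ) ^ 2) *
          (1 / (2 * π) * ∫ φ in (0:ℝ)..(2 * π), ‖Fhat φ k‖ ^ 2) : ℝ) : ℂ) ∧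
      (∑' u : ℤ × ℤ, (S₂ u : ℂ) * dftPhase n u k) =
        ((1 / (4 * (n : ℝ) ^ 2) *
          (1 / (4 * (V : ℝ)) * ∑ ν ∈ Finset.range (4 * V),
            ‖Fhat (2 * π * (ν : ℝ) / (4 * (V : ℝ))) k‖ ^ 2) : ℝ) : ℂ) :=
  stmt_4_general n V hV F g hF S₂ hS₂ Fhat hFhat
end
end

section
/- Let F be a steerable image family of radius n and angular bandlimit V, and define S₃[u,v] := (1/(4n²))·(1/2π)∫₀^{2π} Σ_{ℓ∈ℤ²} F_φ[ℓ]F_φ[ℓ+u]F_φ[ℓ+v] dφ. Then for every k₁, k₂ ∈ ℤ²: (i) Σ_{u,v∈ℤ²} S₃[u,v]·e^{−2πi(u·k₁ + v·k₂)/(4n)} = (1/(4n²))·(1/2π)∫₀^{2π} F̂_φ[k₁]·F̂_φ[k₂]·F̂_φ[−k₁−k₂] dφ, where F̂_φ[k] := Σ_{ℓ∈ℤ²} F_φ[ℓ]·e^{−2πi(ℓ·k)/(4n)}; and (ii) this quantity equals (1/(4n²))·(1/(6V))·Σ_{ν=0}^{6V−1} F̂_{φ_ν}[k₁]·F̂_{φ_ν}[k₂]·F̂_{φ_ν}[−k₁−k₂],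 where φ_ν := 2πν/(6V). -/
open Real MeasureTheory intervalIntegral

noncomputable section

namespace Stmt5

def ph (n : ℕ) (ℓ k : ℤ × ℤ) : ℂ :=
  -(2 * (π : ℂ) * Complex.I * ((ℓ.1 * k.1 + ℓ.2 * k.2 : ℤ) : ℂ)) / (4 * (n : ℂ))

lemma dftPhase_eq (n : ℕ) (ℓ k : ℤ × ℤ) : dftPhase n ℓ k = Complex.exp (ph n ℓ k) := rfl

lemma dftPhase_add_left (n : ℕ) (a b k : ℤ × ℤ) :
    dftPhase n (a + b) k = dftPhase n a k * dftPhase n b k := by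
  rw [dftPhase_eq, dftPhase_eq, dftPhase_eq, ← Complex.exp_add]
  congr 1
  simp only [ph, Prod.fst_add, Prod.snd_add]; push_cast; ring

lemma dftPhase_neg_mul (n : ℕ) (ℓ k₁ k₂ : ℤ × ℤ) :
    dftPhase n (-ℓ) k₁ * dftPhase n (-ℓ) k₂ = dftPhase n ℓ (-k₁ - k₂) := by
  rw [dftPhase_eq, dftPhase_eq, dftPhase_eq, ← Complex.exp_add]
  congr 1
  simp only [ph, Prod.fst_neg, Prod.snd_neg, Prod.fst_sub, Prod.snd_sub]
  push_cast; ring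

def box (n : ℕ) : Finset (ℤ × ℤ) := Finset.Icc (-(n:ℤ)) n ×ˢ Finset.Icc (-(n:ℤ)) n

lemma mem_box {n : ℕ} {ℓ : ℤ × ℤ} : ℓ ∈ box n ↔ |ℓ.1| ≤ (n:ℤ) ∧ |ℓ.2| ≤ (n:ℤ) := by
  simp [box, Finset.mem_product, Finset.mem_Icc, abs_le]

def box2 (n : ℕ) : Finset (ℤ × ℤ) := Finset.Icc (-(2*n:ℤ)) (2*n) ×ˢ Finset.Icc (-(2*n:ℤ)) (2*n)

lemma mem_box2_of (n : ℕ) {ℓ u : ℤ × ℤ} (h1 : ℓ ∈ box n) (h2 : ℓ + u ∈ box n) : u ∈ box2 n := by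
  rw [mem_box] at h1 h2
  simp only [Prod.fst_add, Prod.snd_add] at h2
  simp only [box2, Finset.mem_product, Finset.mem_Icc]
  rw [abs_le, abs_le] at h1
  rw [abs_le, abs_le] at h2
  omega

variable {n V : ℕ} {F : ℝ → ℤ × ℤ → ℝ} {g : ℤ → ℤ × ℤ → ℂ}

lemma F_eq_zero (hF : Steerable n V F g) (φ : ℝ) {ℓ : ℤ × ℤ} (hℓ : ℓ ∉ box n) : F φ ℓ = 0 := by
  have h : (F φ ℓ : ℂ) = 0 := by
    rw [hF.2 φ ℓ]
    refine Finset.sum_eq_zero fun ν _ => ?_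
    rw [hF.1 ν ℓ, zero_mul]
    rw [mem_box] at hℓ
    rcases not_and_or.1 hℓ with h | h <;>
      [exact lt_max_of_lt_left (not_le.1 h); exact lt_max_of_lt_right (not_le.1 h)]
  exact_mod_cast h

lemma contF (hF : Steerable n V F g) (ℓ : ℤ × ℤ) : Continuous fun φ : ℝ => (F φ ℓ : ℂ) := by
  have h : (fun φ : ℝ => (F φ ℓ : ℂ)) =
      fun φ : ℝ => ∑ ν ∈ Finset.Icc (-(V : ℤ)) (V : ℤ),
        g ν ℓ * Complex.exp (Complex.I * (ν : ℂ) * (φ : ℂ)) :=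
    funext fun φ => hF.2 φ ℓ
  rw [h]
  exact continuous_finset_sum _ fun ν _ => by fun_prop

lemma translate (hF : Steerable n V F g) (φ : ℝ) (k : ℤ × ℤ) {ℓ : ℤ × ℤ} (hℓ : ℓ ∈ box n) :
    ∑ u ∈ box2 n, (F φ (ℓ + u) : ℂ) * dftPhase n u k =
      (∑ x ∈ box n, (F φ x : ℂ) * dftPhase n x k) * dftPhase n (-ℓ) k := by
  have h1 : ∑ u ∈ box2 n, (F φ (ℓ + u) : ℂ) * dftPhase n u k =
      ∑' u : ℤ × ℤ, (F φ (ℓ + u) : ℂ) * dftPhase n u k := by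
    refine (tsum_eq_sum fun u hu => ?_).symm
    have : F φ (ℓ + u) = 0 := by
      by_contra hne
      exact hu (mem_box2_of n hℓ (by
        by_contra hmem
        exact hne (F_eq_zero hF φ hmem)))
    rw [this]; simp
  have h2 : (∑' u : ℤ × ℤ, (F φ (ℓ + u) : ℂ) * dftPhase n u k) =
      ∑' x : ℤ × ℤ, (F φ x : ℂ) * dftPhase n (x - ℓ) k := by
    refine Eq.symm ?_
    rw [← (Equiv.addLeft ℓ).tsum_eq (fun x => (F φ x : ℂ) * dftPhase n (x - ℓ) k)]
    refine tsum_congr fun u => ?_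
    simp [Equiv.addLeft, add_sub_cancel_left]
  have h3 : (∑' x : ℤ × ℤ, (F φ x : ℂ) * dftPhase n (x - ℓ) k) =
      ∑ x ∈ box n, (F φ x : ℂ) * dftPhase n (x - ℓ) k := by
    refine tsum_eq_sum fun x hx => ?_
    rw [F_eq_zero hF φ hx]; simp
  rw [h1, h2, h3, Finset.sum_mul]
  refine Finset.sum_congr rfl fun x _ => ?_
  rw [sub_eq_add_neg, dftPhase_add_left]
  ring

lemma pointwise (hF : Steerable n V F g) (φ : ℝ) (k₁ k₂ : ℤ × ℤ) :
    ∑ u ∈ box2 n, ∑ v ∈ box2 n,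
      (∑ ℓ ∈ box n, (F φ ℓ : ℂ) * (F φ (ℓ + u) : ℂ) * (F φ (ℓ + v) : ℂ)) *
        (dftPhase n u k₁ * dftPhase n v k₂) =
      (∑ x ∈ box n, (F φ x : ℂ) * dftPhase n x k₁) *
        (∑ x ∈ box n, (F φ x : ℂ) * dftPhase n x k₂) *
          (∑ x ∈ box n, (F φ x : ℂ) * dftPhase n x (-k₁ - k₂)) := by
  have step1 : ∀ u ∈ box2 n, ∀ v ∈ box2 n,
      (∑ ℓ ∈ box n, (F φ ℓ : ℂ) * (F φ (ℓ + u) : ℂ) * (F φ (ℓ + v) : ℂ)) *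
        (dftPhase n u k₁ * dftPhase n v k₂) =
      ∑ ℓ ∈ box n, (F φ ℓ : ℂ) * ((F φ (ℓ + u) : ℂ) * dftPhase n u k₁) *
        ((F φ (ℓ + v) : ℂ) * dftPhase n v k₂) := by
    intro u _ v _
    rw [Finset.sum_mul]
    exact Finset.sum_congr rfl fun ℓ _ => by ring
  calc
    ∑ u ∈ box2 n, ∑ v ∈ box2 n,
        (∑ ℓ ∈ box n, (F φ ℓ : ℂ) * (F φ (ℓ + u) : ℂ) * (F φ (ℓ + v) : ℂ)) *
          (dftPhase n u k₁ * dftPhase n v k₂)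
      = ∑ u ∈ box2 n, ∑ v ∈ box2 n, ∑ ℓ ∈ box n,
          (F φ ℓ : ℂ) * ((F φ (ℓ + u) : ℂ) * dftPhase n u k₁) *
            ((F φ (ℓ + v) : ℂ) * dftPhase n v k₂) := by
        exact Finset.sum_congr rfl fun u hu => Finset.sum_congr rfl fun v hv => step1 u hu v hv
    _ = ∑ u ∈ box2 n, ∑ ℓ ∈ box n, ∑ v ∈ box2 n,
          (F φ ℓ : ℂ) * ((F φ (ℓ + u) : ℂ) * dftPhase n u k₁) *
            ((F φ (ℓ + v) : ℂ) * dftPhase n v k₂) :=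
        Finset.sum_congr rfl fun u _ => Finset.sum_comm
    _ = ∑ ℓ ∈ box n, ∑ u ∈ box2 n, ∑ v ∈ box2 n,
          (F φ ℓ : ℂ) * ((F φ (ℓ + u) : ℂ) * dftPhase n u k₁) *
            ((F φ (ℓ + v) : ℂ) * dftPhase n v k₂) := Finset.sum_comm
    _ = ∑ ℓ ∈ box n, (F φ ℓ : ℂ) *
          (∑ u ∈ box2 n, (F φ (ℓ + u) : ℂ) * dftPhase n u k₁) *
            (∑ v ∈ box2 n, (F φ (ℓ + v) : ℂ) * dftPhase n v k₂) := by
        refine Finset.sum_congr rfl fun ℓ _ => ?_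
        refine Eq.symm ?_
        rw [Finset.mul_sum, Finset.sum_comm]
        refine Finset.sum_congr rfl fun v _ => ?_
        rw [Finset.mul_sum, Finset.sum_mul]
    _ = ∑ ℓ ∈ box n, (F φ ℓ : ℂ) *
          ((∑ x ∈ box n, (F φ x : ℂ) * dftPhase n x k₁) * dftPhase n (-ℓ) k₁) *
            ((∑ x ∈ box n, (F φ x : ℂ) * dftPhase n x k₂) * dftPhase n (-ℓ) k₂) := by
        refine Finset.sum_congr rfl fun ℓ hℓ => ?_
        rw [translate hF φ k₁ hℓ, translate hF φ k₂ hℓ]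
    _ = (∑ x ∈ box n, (F φ x : ℂ) * dftPhase n x k₁) *
          (∑ x ∈ box n, (F φ x : ℂ) * dftPhase n x k₂) *
            (∑ ℓ ∈ box n, (F φ ℓ : ℂ) * (dftPhase n (-ℓ) k₁ * dftPhase n (-ℓ) k₂)) := by
        rw [Finset.mul_sum]
        exact Finset.sum_congr rfl fun ℓ _ => by ring
    _ = (∑ x ∈ box n, (F φ x : ℂ) * dftPhase n x k₁) *
          (∑ x ∈ box n, (F φ x : ℂ) * dftPhase n x k₂) *
            (∑ x ∈ box n, (F φ x : ℂ) * dftPhase n x (-k₁ - k₂)) := by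
        congr 1
        exact Finset.sum_congr rfl fun ℓ _ => by rw [dftPhase_neg_mul]

lemma integral_exp_int (ν : ℤ) :
    ∫ φ in (0:ℝ)..(2*π), Complex.exp (Complex.I * (ν:ℂ) * (φ:ℂ)) =
      if ν = 0 then (2*π : ℂ) else 0 := by
  rcases eq_or_ne ν 0 with h | h
  · simp [h]
  · rw [if_neg h]
    have hc : Complex.I * (ν:ℂ) ≠ 0 := by
      simp [Complex.I_ne_zero, Complex.ext_iff]
      exact_mod_cast h
    have := integral_exp_mul_complex (a := 0) (b := 2*π) hc
    simp only [mul_assoc] at this ⊢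
    rw [this]
    have h1 : Complex.I * ((ν:ℂ) * ((2*π:ℝ):ℂ)) = (ν:ℂ) * (2*π*Complex.I) := by
      push_cast; ring
    rw [h1, Complex.exp_int_mul_two_pi_mul_I]
    simp

lemma quad_exp (N : ℕ) (hN : 0 < N) (ν : ℤ) (hν : |ν| < (N:ℤ)) :
    ∑ j ∈ Finset.range N, Complex.exp (Complex.I * (ν:ℂ) * ((2*π*(j:ℝ)/(N:ℝ) : ℝ):ℂ)) =
      if ν = 0 then (N:ℂ) else 0 := by
  rcases eq_or_ne ν 0 with h | h
  · simp [h]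
  · rw [if_neg h]
    have hNC : (N:ℂ) ≠ 0 := Nat.cast_ne_zero.2 hN.ne'
    set ω : ℂ := Complex.exp (2*(π:ℂ)*Complex.I*(ν:ℂ)/(N:ℂ)) with hω
    have hterm : ∀ j ∈ Finset.range N,
        Complex.exp (Complex.I * (ν:ℂ) * ((2*π*(j:ℝ)/(N:ℝ) : ℝ):ℂ)) = ω ^ j := by
      intro j _
      rw [hω, ← Complex.exp_nat_mul]
      congr 1
      push_cast
      field_simp
    rw [Finset.sum_congr rfl hterm]
    have hω1 : ω ≠ 1 := by
      intro hcon
      rw [hω, Complex.exp_eq_one_iff] at hcon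
      obtain ⟨m, hm⟩ := hcon
      have hπ : (π:ℂ) ≠ 0 := by exact_mod_cast Real.pi_ne_zero
      have hI : Complex.I ≠ 0 := Complex.I_ne_zero
      have hcast : (ν:ℂ) = (m:ℂ) * (N:ℂ) := by
        field_simp at hm
        have h2 : (2*(π:ℂ)*Complex.I) * (ν:ℂ) = (2*(π:ℂ)*Complex.I) * ((m:ℂ)*(N:ℂ)) := by
          linear_combination (2*(π:ℂ)*Complex.I) * hm
        exact mul_left_cancel₀ (by simp [hπ, hI]) h2
      have hint : ν = m * N := by exact_mod_cast hcast
      have : (N:ℤ) ≤ |ν| := Int.le_of_dvd (abs_pos.2 h) ((dvd_abs _ _).2 ⟨m, by linarith [hint]⟩)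
      omega
    rw [geom_sum_eq hω1]
    have hωN : ω ^ N = 1 := by
      rw [hω, ← Complex.exp_nat_mul]
      have : (N:ℂ) * (2*(π:ℂ)*Complex.I*(ν:ℂ)/(N:ℂ)) = (ν:ℂ) * (2*(π:ℂ)*Complex.I) := by
        field_simp
      rw [this, Complex.exp_int_mul_two_pi_mul_I]
    rw [hωN]
    simp

lemma trig_quad (N : ℕ) (hN : 0 < N) {ι : Type*} [DecidableEq ι] (T : Finset ι) (e : ι → ℤ)
    (he : ∀ t ∈ T, |e t| < (N:ℤ)) (C : ι → ℂ) :
    ∫ φ in (0:ℝ)..(2*π), ∑ t ∈ T, C t * Complex.exp (Complex.I * (e t : ℂ) * (φ:ℂ)) =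
      2*(π:ℂ)/(N:ℂ) * ∑ j ∈ Finset.range N,
        ∑ t ∈ T, C t * Complex.exp (Complex.I * (e t:ℂ) * ((2*π*(j:ℝ)/(N:ℝ) : ℝ):ℂ)) := by
  have hNC : (N:ℂ) ≠ 0 := Nat.cast_ne_zero.2 hN.ne'
  have hL : (∫ φ in (0:ℝ)..(2*π), ∑ t ∈ T, C t * Complex.exp (Complex.I * (e t : ℂ) * (φ:ℂ)))
      = ∑ t ∈ T, C t * (if e t = 0 then (2*π:ℂ) else 0) := by
    rw [intervalIntegral.integral_finset_sum]
    · refine Finset.sum_congr rfl fun t _ => ?_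
      rw [intervalIntegral.integral_const_mul, integral_exp_int]
    · intro t _
      exact (Continuous.intervalIntegrable (by fun_prop) _ _)
  rw [hL]
  conv_rhs => rw [Finset.sum_comm]
  rw [Finset.mul_sum]
  refine Finset.sum_congr rfl fun t ht => ?_
  rw [← Finset.mul_sum, quad_exp N hN (e t) (he t ht)]
  rcases eq_or_ne (e t) 0 with h | h
  · rw [if_pos h, if_pos h]; field_simp
  · rw [if_neg h, if_neg h]; ring

end Stmt5

open Stmt5

set_option maxHeartbeats 2000000 in
/-- the 2-D DFT of the rotationally-averaged third-order autocorrelation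
`S₃` equals `(1/(4n²))·(1/2π)∫₀^{2π} F̂_φ[k₁]F̂_φ[k₂]F̂_φ[−k₁−k₂] dφ`, computed exactly by
the `6V`-point quadrature. -/
theorem stmt_5 (n V : ℕ) (hn : 1 ≤ n) (hV : 1 ≤ V)
    (F : ℝ → ℤ × ℤ → ℝ) (g : ℤ → ℤ × ℤ → ℂ) (hF : Steerable n V F g)
    (S₃ : ℤ × ℤ → ℤ × ℤ → ℝ)
    (hS₃ : ∀ u v : ℤ × ℤ, S₃ u v =
      1 / (4 * (n : ℝ) ^ 2) *
        (1 / (2 * π) *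
          ∫ φ in (0:ℝ)..(2 * π), ∑' ℓ : ℤ × ℤ, F φ ℓ * F φ (ℓ + u) * F φ (ℓ + v)))
    (Fhat : ℝ → ℤ × ℤ → ℂ)
    (hFhat : ∀ φ : ℝ, ∀ k : ℤ × ℤ,
      Fhat φ k = ∑' ℓ : ℤ × ℤ, (F φ ℓ : ℂ) * dftPhase n ℓ k) :
    ∀ k₁ k₂ : ℤ × ℤ,
      (∑' uv : (ℤ × ℤ) × (ℤ × ℤ),
          (S₃ uv.1 uv.2 : ℂ) * dftPhase n uv.1 k₁ * dftPhase n uv.2 k₂) =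
        1 / (4 * (n : ℂ) ^ 2) *
          (1 / (2 * (π : ℂ)) *
            ∫ φ in (0:ℝ)..(2 * π), Fhat φ k₁ * Fhat φ k₂ * Fhat φ (-k₁ - k₂)) ∧
      (∑' uv : (ℤ × ℤ) × (ℤ × ℤ),
          (S₃ uv.1 uv.2 : ℂ) * dftPhase n uv.1 k₁ * dftPhase n uv.2 k₂) =
        1 / (4 * (n : ℂ) ^ 2) *
          (1 / (6 * (V : ℂ)) * ∑ ν ∈ Finset.range (6 * V),
            Fhat (2 * π * (ν : ℝ) / (6 * (V : ℝ))) k₁ *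
              Fhat (2 * π * (ν : ℝ) / (6 * (V : ℝ))) k₂ *
                Fhat (2 * π * (ν : ℝ) / (6 * (V : ℝ))) (-k₁ - k₂)) := by
  intro k₁ k₂
  -- finite-sum representation of Fhat
  have hFA : ∀ (φ : ℝ) (k : ℤ × ℤ),
      Fhat φ k = ∑ ℓ ∈ box n, (F φ ℓ : ℂ) * dftPhase n ℓ k := fun φ k => by
    rw [hFhat φ k]
    exact tsum_eq_sum fun ℓ hℓ => by rw [F_eq_zero hF φ hℓ]; simp
  -- complex form of S₃
  have hS3C : ∀ u v : ℤ × ℤ, (S₃ u v : ℂ) =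
      1 / (4 * (n : ℂ) ^ 2) * ((1 / (2 * (π : ℂ))) *
        ∫ φ in (0:ℝ)..(2*π),
          ∑ ℓ ∈ box n, (F φ ℓ : ℂ) * (F φ (ℓ + u) : ℂ) * (F φ (ℓ + v) : ℂ)) := by
    intro u v
    have htf : ∀ φ : ℝ, (∑' ℓ : ℤ × ℤ, F φ ℓ * F φ (ℓ + u) * F φ (ℓ + v)) =
        ∑ ℓ ∈ box n, F φ ℓ * F φ (ℓ + u) * F φ (ℓ + v) := fun φ =>
      tsum_eq_sum fun ℓ hℓ => by rw [F_eq_zero hF φ hℓ]; ring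
    rw [hS₃ u v]
    simp only [htf]
    push_cast [← intervalIntegral.integral_ofReal]
    norm_num
  -- vanishing of S₃ outside box2 × box2
  have hzero : ∀ u v : ℤ × ℤ, u ∉ box2 n ∨ v ∉ box2 n → S₃ u v = 0 := by
    intro u v h
    rw [hS₃ u v]
    have hts : ∀ φ : ℝ, (∑' ℓ : ℤ × ℤ, F φ ℓ * F φ (ℓ + u) * F φ (ℓ + v)) = 0 := by
      intro φ
      have hterm : ∀ ℓ : ℤ × ℤ, F φ ℓ * F φ (ℓ + u) * F φ (ℓ + v) = 0 := by
        intro ℓ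
        by_cases h1 : ℓ ∈ box n
        · rcases h with h | h
          · by_cases h2 : ℓ + u ∈ box n
            · exact absurd (mem_box2_of n h1 h2) h
            · rw [F_eq_zero hF φ h2]; ring
          · by_cases h2 : ℓ + v ∈ box n
            · exact absurd (mem_box2_of n h1 h2) h
            · rw [F_eq_zero hF φ h2]; ring
        · rw [F_eq_zero hF φ h1]; ring
      simp [hterm]
    simp [hts]
  -- LHS as finite sum
  have hLHS : (∑' uv : (ℤ × ℤ) × (ℤ × ℤ),
        (S₃ uv.1 uv.2 : ℂ) * dftPhase n uv.1 k₁ * dftPhase n uv.2 k₂) =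
      ∑ u ∈ box2 n, ∑ v ∈ box2 n, (S₃ u v : ℂ) * dftPhase n u k₁ * dftPhase n v k₂ := by
    rw [tsum_eq_sum (s := box2 n ×ˢ box2 n) (fun uv huv => by
      rw [Finset.mem_product] at huv
      rw [hzero uv.1 uv.2 (not_and_or.mp huv)]
      simp)]
    rw [Finset.sum_product]
  -- main identity (i)
  have hmain : (∑ u ∈ box2 n, ∑ v ∈ box2 n,
        (S₃ u v : ℂ) * dftPhase n u k₁ * dftPhase n v k₂) =
      1 / (4 * (n : ℂ) ^ 2) * (1 / (2 * (π : ℂ)) *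
        ∫ φ in (0:ℝ)..(2 * π), Fhat φ k₁ * Fhat φ k₂ * Fhat φ (-k₁ - k₂)) := by
    have hcont : ∀ u v : ℤ × ℤ, Continuous fun φ : ℝ =>
        (∑ ℓ ∈ box n, (F φ ℓ : ℂ) * (F φ (ℓ + u) : ℂ) * (F φ (ℓ + v) : ℂ)) *
          (dftPhase n u k₁ * dftPhase n v k₂) := fun u v =>
      (continuous_finset_sum _ fun ℓ _ =>
        ((contF hF ℓ).mul (contF hF (ℓ + u))).mul (contF hF (ℓ + v))).mul continuous_const
    calc
      ∑ u ∈ box2 n, ∑ v ∈ box2 n, (S₃ u v : ℂ) * dftPhase n u k₁ * dftPhase n v k₂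
        = ∑ u ∈ box2 n, ∑ v ∈ box2 n, (1 / (4 * (n : ℂ) ^ 2) * (1 / (2 * (π : ℂ)))) *
            ∫ φ in (0:ℝ)..(2*π),
              (∑ ℓ ∈ box n, (F φ ℓ : ℂ) * (F φ (ℓ + u) : ℂ) * (F φ (ℓ + v) : ℂ)) *
                (dftPhase n u k₁ * dftPhase n v k₂) := by
          refine Finset.sum_congr rfl fun u _ => Finset.sum_congr rfl fun v _ => ?_
          rw [hS3C u v, intervalIntegral.integral_mul_const]
          ring
      _ = (1 / (4 * (n : ℂ) ^ 2) * (1 / (2 * (π : ℂ)))) *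
            ∫ φ in (0:ℝ)..(2*π), ∑ u ∈ box2 n, ∑ v ∈ box2 n,
              (∑ ℓ ∈ box n, (F φ ℓ : ℂ) * (F φ (ℓ + u) : ℂ) * (F φ (ℓ + v) : ℂ)) *
                (dftPhase n u k₁ * dftPhase n v k₂) := by
          refine Eq.symm ?_
          have swap1 : (∫ φ in (0:ℝ)..(2*π), ∑ u ∈ box2 n, ∑ v ∈ box2 n,
              (∑ ℓ ∈ box n, (F φ ℓ : ℂ) * (F φ (ℓ + u) : ℂ) * (F φ (ℓ + v) : ℂ)) *
                (dftPhase n u k₁ * dftPhase n v k₂))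
              = ∑ u ∈ box2 n, ∫ φ in (0:ℝ)..(2*π), ∑ v ∈ box2 n,
                  (∑ ℓ ∈ box n, (F φ ℓ : ℂ) * (F φ (ℓ + u) : ℂ) * (F φ (ℓ + v) : ℂ)) *
                    (dftPhase n u k₁ * dftPhase n v k₂) :=
            intervalIntegral.integral_finset_sum (fun u _ => by
              rw [← Finset.sum_fn]
              exact IntervalIntegrable.sum _ (fun v _ =>
                (Continuous.intervalIntegrable (hcont u v) _ _)))
          have swap2 : ∀ u : ℤ × ℤ, (∫ φ in (0:ℝ)..(2*π), ∑ v ∈ box2 n,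
              (∑ ℓ ∈ box n, (F φ ℓ : ℂ) * (F φ (ℓ + u) : ℂ) * (F φ (ℓ + v) : ℂ)) *
                (dftPhase n u k₁ * dftPhase n v k₂))
              = ∑ v ∈ box2 n, ∫ φ in (0:ℝ)..(2*π),
                  (∑ ℓ ∈ box n, (F φ ℓ : ℂ) * (F φ (ℓ + u) : ℂ) * (F φ (ℓ + v) : ℂ)) *
                    (dftPhase n u k₁ * dftPhase n v k₂) := fun u =>
            intervalIntegral.integral_finset_sum (fun v _ =>
              (Continuous.intervalIntegrable (hcont u v) _ _))
          rw [swap1, Finset.mul_sum]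
          refine Finset.sum_congr rfl fun u _ => ?_
          rw [swap2 u, Finset.mul_sum]
      _ = (1 / (4 * (n : ℂ) ^ 2) * (1 / (2 * (π : ℂ)))) *
            ∫ φ in (0:ℝ)..(2*π), Fhat φ k₁ * Fhat φ k₂ * Fhat φ (-k₁ - k₂) := by
          congr 1
          refine intervalIntegral.integral_congr fun φ _ => ?_
          rw [pointwise hF φ k₁ k₂, ← hFA, ← hFA, ← hFA]
      _ = 1 / (4 * (n : ℂ) ^ 2) * (1 / (2 * (π : ℂ)) *
            ∫ φ in (0:ℝ)..(2 * π), Fhat φ k₁ * Fhat φ k₂ * Fhat φ (-k₁ - k₂)) := by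
          ring
  refine ⟨hLHS.trans hmain, (hLHS.trans hmain).trans ?_⟩
  -- part (ii): quadrature exactness
  have hpoly : ∀ (φ : ℝ) (k : ℤ × ℤ), Fhat φ k =
      ∑ ν ∈ Finset.Icc (-(V:ℤ)) (V:ℤ),
        (∑ ℓ ∈ box n, g ν ℓ * dftPhase n ℓ k) * Complex.exp (Complex.I * (ν:ℂ) * (φ:ℂ)) := by
    intro φ k
    rw [hFA φ k]
    calc
      ∑ ℓ ∈ box n, (F φ ℓ : ℂ) * dftPhase n ℓ k
        = ∑ ℓ ∈ box n, ∑ ν ∈ Finset.Icc (-(V:ℤ)) (V:ℤ),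
            g ν ℓ * Complex.exp (Complex.I * (ν:ℂ) * (φ:ℂ)) * dftPhase n ℓ k := by
          refine Finset.sum_congr rfl fun ℓ _ => ?_
          rw [hF.2 φ ℓ, Finset.sum_mul]
      _ = ∑ ν ∈ Finset.Icc (-(V:ℤ)) (V:ℤ), ∑ ℓ ∈ box n,
            g ν ℓ * Complex.exp (Complex.I * (ν:ℂ) * (φ:ℂ)) * dftPhase n ℓ k :=
          Finset.sum_comm
      _ = ∑ ν ∈ Finset.Icc (-(V:ℤ)) (V:ℤ),
            (∑ ℓ ∈ box n, g ν ℓ * dftPhase n ℓ k) * Complex.exp (Complex.I * (ν:ℂ) * (φ:ℂ)) := by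
          refine Finset.sum_congr rfl fun ν _ => ?_
          rw [Finset.sum_mul]
          exact Finset.sum_congr rfl fun ℓ _ => by ring
  have hP : ∀ φ : ℝ, Fhat φ k₁ * Fhat φ k₂ * Fhat φ (-k₁ - k₂) =
      ∑ t ∈ (Finset.Icc (-(V:ℤ)) (V:ℤ) ×ˢ (Finset.Icc (-(V:ℤ)) (V:ℤ) ×ˢ Finset.Icc (-(V:ℤ)) (V:ℤ))),
        ((∑ ℓ ∈ box n, g t.1 ℓ * dftPhase n ℓ k₁) *
          (∑ ℓ ∈ box n, g t.2.1 ℓ * dftPhase n ℓ k₂) *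
            (∑ ℓ ∈ box n, g t.2.2 ℓ * dftPhase n ℓ (-k₁ - k₂))) *
          Complex.exp (Complex.I * ((t.1 + t.2.1 + t.2.2 : ℤ):ℂ) * (φ:ℂ)) := by
    intro φ
    rw [hpoly φ k₁, hpoly φ k₂, hpoly φ (-k₁ - k₂), Finset.sum_mul_sum, Finset.sum_mul_sum,
      Finset.sum_product]
    refine Finset.sum_congr rfl fun ν₁ _ => ?_
    rw [Finset.sum_product, Finset.sum_comm]
    refine Finset.sum_congr rfl fun ν₃ _ => ?_
    rw [Finset.sum_mul]
    refine Finset.sum_congr rfl fun ν₂ _ => ?_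
    have hE : Complex.exp (Complex.I * ((ν₁ + ν₂ + ν₃ : ℤ):ℂ) * (φ:ℂ)) =
        Complex.exp (Complex.I * (ν₁:ℂ) * (φ:ℂ)) * Complex.exp (Complex.I * (ν₂:ℂ) * (φ:ℂ)) *
          Complex.exp (Complex.I * (ν₃:ℂ) * (φ:ℂ)) := by
      rw [← Complex.exp_add, ← Complex.exp_add]
      congr 1
      push_cast
      ring
    rw [hE]
    ring
  have hT : ∀ t ∈ (Finset.Icc (-(V:ℤ)) (V:ℤ) ×ˢ (Finset.Icc (-(V:ℤ)) (V:ℤ) ×ˢ Finset.Icc (-(V:ℤ)) (V:ℤ))),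
      |t.1 + t.2.1 + t.2.2| < ((6*V : ℕ):ℤ) := by
    intro t ht
    simp only [Finset.mem_product, Finset.mem_Icc] at ht
    rw [abs_lt]
    push_cast
    omega
  have hquad := trig_quad (6*V) (by omega)
    (Finset.Icc (-(V:ℤ)) (V:ℤ) ×ˢ (Finset.Icc (-(V:ℤ)) (V:ℤ) ×ˢ Finset.Icc (-(V:ℤ)) (V:ℤ)))
    (fun t => t.1 + t.2.1 + t.2.2) hT
    (fun t => (∑ ℓ ∈ box n, g t.1 ℓ * dftPhase n ℓ k₁) *
      (∑ ℓ ∈ box n, g t.2.1 ℓ * dftPhase n ℓ k₂) *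
        (∑ ℓ ∈ box n, g t.2.2 ℓ * dftPhase n ℓ (-k₁ - k₂)))
  have hnode : ∀ j : ℕ, (2*π*(j:ℝ)/((6*V : ℕ):ℝ)) = 2 * π * (j:ℝ) / (6 * (V:ℝ)) := by
    intro j; push_cast; ring
  have hπ : (π:ℂ) ≠ 0 := Complex.ofReal_ne_zero.2 Real.pi_ne_zero
  have hVC : (V:ℂ) ≠ 0 := Nat.cast_ne_zero.2 (by omega)
  have hIP : (∫ φ in (0:ℝ)..(2 * π), Fhat φ k₁ * Fhat φ k₂ * Fhat φ (-k₁ - k₂)) =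
      2*(π:ℂ)/((6*V : ℕ):ℂ) * ∑ j ∈ Finset.range (6*V),
        Fhat (2 * π * (j:ℝ) / (6 * (V:ℝ))) k₁ * Fhat (2 * π * (j:ℝ) / (6 * (V:ℝ))) k₂ *
          Fhat (2 * π * (j:ℝ) / (6 * (V:ℝ))) (-k₁ - k₂) := by
    rw [intervalIntegral.integral_congr fun φ _ => hP φ, hquad]
    congr 1
    refine Finset.sum_congr rfl fun j _ => ?_
    rw [← hnode j, ← hP (2*π*(j:ℝ)/((6*V : ℕ):ℝ))]
  rw [hIP]
  have h6V : ((6*V : ℕ):ℂ) = 6 * (V:ℂ) := by push_cast; ring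
  rw [h6V]
  congr 1
  rw [← mul_assoc]
  congr 1
  field_simp
end
end

section
/- Let F be a steerable image family of radius n and angular bandlimit V, let m[ℓ] := (1/2π)∫₀^{2π} F_φ[ℓ] dφ, and define S_{3,pair}[a,b] := (1/(4n²))·(1/2π)∫₀^{2π} Σ_{ℓ∈ℤ²} F_φ[ℓ]F_φ[ℓ+a]m[ℓ+b] dφ. Then for all k₁, k₂ ∈ ℤ²: Σ_{a,b∈ℤ²} S_{3,pair}[a,b]·e^{−2πi(a·k₁ + b·k₂)/(4n)} = (1/(4n²))·m̂[k₂]·(1/2π)∫₀^{2π} F̂_φ[k₁]·F̂_φ[−k₁−k₂] dφ = (1/(4n²))·m̂[k₂]·(1/(4V))·Σ_{ν=0}^{4V−1} F̂_{φ_ν}[k₁]·F̂_{φ_ν}[−k₁−k₂], where φ_ν := 2πν/(4V), F̂_φ[k] := Σ_{ℓ∈ℤ²} F_φ[ℓ]·e^{−2πi(ℓ·k)/(4n)}, and m̂[k] := Σ_{ℓ∈ℤ²} m[ℓ]·e^{−2πi(ℓ·k)/(4n)}. -/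
open Real MeasureTheory intervalIntegral

noncomputable section

namespace Stmt7Aux

def box (n : ℕ) : Finset (ℤ × ℤ) := Finset.Icc (-(n:ℤ), -(n:ℤ)) ((n:ℤ), (n:ℤ))

lemma mem_box {n : ℕ} {ℓ : ℤ × ℤ} :
    ℓ ∈ box n ↔ -(n:ℤ) ≤ ℓ.1 ∧ ℓ.1 ≤ n ∧ -(n:ℤ) ≤ ℓ.2 ∧ ℓ.2 ≤ n := by
  simp only [box, Finset.mem_Icc, Prod.le_def]; omega

lemma not_mem_box {n : ℕ} {ℓ : ℤ × ℤ} (h : ℓ ∉ box n) : (n:ℤ) < max |ℓ.1| |ℓ.2| := by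
  rw [mem_box] at h
  rw [lt_max_iff, lt_abs, lt_abs]
  omega

lemma dftPhase_add_left (n : ℕ) (x y k : ℤ × ℤ) :
    dftPhase n (x + y) k = dftPhase n x k * dftPhase n y k := by
  simp only [dftPhase, ← Complex.exp_add, Prod.fst_add, Prod.snd_add]
  congr 1
  rw [← add_div]
  congr 1
  push_cast
  ring

lemma dftPhase_add_right (n : ℕ) (ℓ k k' : ℤ × ℤ) :
    dftPhase n ℓ (k + k') = dftPhase n ℓ k * dftPhase n ℓ k' := by
  simp only [dftPhase, ← Complex.exp_add, Prod.fst_add, Prod.snd_add]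
  congr 1
  rw [← add_div]
  congr 1
  push_cast
  ring

lemma dftPhase_zero_right (n : ℕ) (ℓ : ℤ × ℤ) : dftPhase n ℓ 0 = 1 := by
  simp [dftPhase]



lemma key_quad (V : ℕ) (hV : 1 ≤ V) (μ : ℤ) (hμ : |μ| ≤ 2*(V:ℤ)) :
    (1/(2*(π:ℂ))) * ∫ φ in (0:ℝ)..(2*π), Complex.exp (Complex.I * (μ:ℂ) * (φ:ℂ))
      = (1/(4*(V:ℂ))) * ∑ ν ∈ Finset.range (4*V),
          Complex.exp (Complex.I * (μ:ℂ) * ((2*π*(ν:ℝ)/(4*(V:ℝ)) : ℝ) : ℂ)) := by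
  have hπ : (π:ℂ) ≠ 0 := by exact_mod_cast Real.pi_ne_zero
  have hV0 : (V:ℂ) ≠ 0 := by exact_mod_cast (by omega : V ≠ 0)
  have hL : (1/(2*(π:ℂ))) * ∫ φ in (0:ℝ)..(2*π), Complex.exp (Complex.I * (μ:ℂ) * (φ:ℂ))
      = if μ = 0 then 1 else 0 := by
    by_cases h0 : μ = 0
    · subst h0
      simp only [Int.cast_zero, mul_zero, zero_mul, Complex.exp_zero, if_true]
      rw [intervalIntegral.integral_const]
      simp only [sub_zero, Complex.real_smul, mul_one]
      push_cast
      field_simp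
    · have hc : Complex.I * (μ:ℂ) ≠ 0 := by
        simp [Complex.I_ne_zero, Complex.ext_iff]
        exact_mod_cast h0
      rw [if_neg h0]
      have : ∀ φ : ℝ, Complex.exp (Complex.I * (μ:ℂ) * (φ:ℂ)) =
          Complex.exp ((Complex.I * (μ:ℂ)) * (φ:ℂ)) := fun φ => rfl
      rw [integral_exp_mul_complex hc]
      have h2π : Complex.I * (μ:ℂ) * ((2*π : ℝ):ℂ) = (μ:ℂ) * (2*(π:ℂ)*Complex.I) := by
        push_cast; ring
      rw [h2π, Complex.exp_int_mul_two_pi_mul_I]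
      simp
  have hR : (1/(4*(V:ℂ))) * ∑ ν ∈ Finset.range (4*V),
          Complex.exp (Complex.I * (μ:ℂ) * ((2*π*(ν:ℝ)/(4*(V:ℝ)) : ℝ) : ℂ))
      = if μ = 0 then 1 else 0 := by
    set z : ℂ := Complex.exp (Complex.I * (μ:ℂ) * (2*(π:ℂ)/(4*(V:ℂ)))) with hz
    have hterm : ∀ ν ∈ Finset.range (4*V),
        Complex.exp (Complex.I * (μ:ℂ) * ((2*π*(ν:ℝ)/(4*(V:ℝ)) : ℝ) : ℂ)) = z ^ ν := by
      intro ν _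
      rw [hz, ← Complex.exp_nat_mul]
      congr 1
      push_cast
      ring
    rw [Finset.sum_congr rfl hterm]
    by_cases h0 : μ = 0
    · subst h0
      have : z = 1 := by rw [hz]; simp
      simp only [this, one_pow, Finset.sum_const, Finset.card_range, nsmul_eq_mul, if_true]
      push_cast
      field_simp
    · rw [if_neg h0]
      have hzN : z ^ (4*V) = 1 := by
        rw [hz, ← Complex.exp_nat_mul]
        have : ((4*V : ℕ):ℂ) * (Complex.I * (μ:ℂ) * (2*(π:ℂ)/(4*(V:ℂ)))) =
            (μ:ℂ) * (2*(π:ℂ)*Complex.I) := by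
          push_cast
          field_simp
        rw [this, Complex.exp_int_mul_two_pi_mul_I]
      have hz1 : z ≠ 1 := by
        intro hzz
        rw [hz, Complex.exp_eq_one_iff] at hzz
        obtain ⟨q, hq⟩ := hzz
        have hμq : (μ:ℂ) = (q:ℂ) * (4*(V:ℂ)) := by
          field_simp at hq
          have h2 : (2*(π:ℂ)*Complex.I) * (μ:ℂ) = (2*(π:ℂ)*Complex.I) * ((q:ℂ)*(4*(V:ℂ))) := by
            linear_combination (2*(π:ℂ)*Complex.I) * hq
          exact mul_left_cancel₀ (mul_ne_zero (mul_ne_zero two_ne_zero hπ) Complex.I_ne_zero) h2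
        have hμq' : μ = q * (4*(V:ℤ)) := by exact_mod_cast hμq
        have hq0 : q ≠ 0 := by
          intro h; rw [h] at hμq'; simp at hμq'; exact h0 hμq'
        have hdvd : (4*(V:ℤ)) ∣ |μ| := (dvd_abs _ _).mpr ⟨q, by linarith [hμq']⟩
        have hpos : 0 < |μ| := abs_pos.mpr h0
        have := Int.le_of_dvd hpos hdvd
        have hVZ : (1:ℤ) ≤ (V:ℤ) := by exact_mod_cast hV
        linarith
      rw [geom_sum_eq hz1, hzN]
      simp
  rw [hL, hR]


end Stmt7Aux

open Stmt7Aux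

/-- the 2-D DFT of `S_{3,pair}` factors as `(1/(4n²))·m̂[k₂]` times the
rotational average of `F̂_φ[k₁]F̂_φ[−k₁−k₂]`, computed exactly by the `4V`-point quadrature. -/
theorem stmt_7 (n V : ℕ) (hn : 1 ≤ n) (hV : 1 ≤ V)
    (F : ℝ → ℤ × ℤ → ℝ) (g : ℤ → ℤ × ℤ → ℂ) (hF : Steerable n V F g)
    (m : ℤ × ℤ → ℝ)
    (hm : ∀ ℓ : ℤ × ℤ, m ℓ = 1 / (2 * π) * ∫ φ in (0:ℝ)..(2 * π), F φ ℓ)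
    (S3pair : ℤ × ℤ → ℤ × ℤ → ℝ)
    (hS3pair : ∀ a b : ℤ × ℤ, S3pair a b =
      1 / (4 * (n : ℝ) ^ 2) *
        (1 / (2 * π) *
          ∫ φ in (0:ℝ)..(2 * π), ∑' ℓ : ℤ × ℤ, F φ ℓ * F φ (ℓ + a) * m (ℓ + b)))
    (Fhat : ℝ → ℤ × ℤ → ℂ)
    (hFhat : ∀ φ : ℝ, ∀ k : ℤ × ℤ,
      Fhat φ k = ∑' ℓ : ℤ × ℤ, (F φ ℓ : ℂ) * dftPhase n ℓ k)
    (mhat : ℤ × ℤ → ℂ)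
    (hmhat : ∀ k : ℤ × ℤ, mhat k = ∑' ℓ : ℤ × ℤ, (m ℓ : ℂ) * dftPhase n ℓ k) :
    ∀ k₁ k₂ : ℤ × ℤ,
      (∑' ab : (ℤ × ℤ) × (ℤ × ℤ),
          (S3pair ab.1 ab.2 : ℂ) * dftPhase n ab.1 k₁ * dftPhase n ab.2 k₂) =
        1 / (4 * (n : ℂ) ^ 2) * mhat k₂ *
          (1 / (2 * (π : ℂ)) *
            ∫ φ in (0:ℝ)..(2 * π), Fhat φ k₁ * Fhat φ (-k₁ - k₂)) ∧
      (∑' ab : (ℤ × ℤ) × (ℤ × ℤ),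
          (S3pair ab.1 ab.2 : ℂ) * dftPhase n ab.1 k₁ * dftPhase n ab.2 k₂) =
        1 / (4 * (n : ℂ) ^ 2) * mhat k₂ *
          (1 / (4 * (V : ℂ)) * ∑ ν ∈ Finset.range (4 * V),
            Fhat (2 * π * (ν : ℝ) / (4 * (V : ℝ))) k₁ *
              Fhat (2 * π * (ν : ℝ) / (4 * (V : ℝ))) (-k₁ - k₂)) := by
  intro k₁ k₂
  set k₃ : ℤ × ℤ := -k₁ - k₂ with hk₃
  -- basic vanishing
  have hFz : ∀ (φ : ℝ) (ℓ : ℤ × ℤ), ℓ ∉ box n → F φ ℓ = 0 := by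
    intro φ ℓ h
    have h2 := hF.2 φ ℓ
    rw [Finset.sum_eq_zero (fun ν _ => by rw [hF.1 ν ℓ (not_mem_box h), zero_mul])] at h2
    exact_mod_cast h2
  have hmz : ∀ ℓ : ℤ × ℤ, ℓ ∉ box n → m ℓ = 0 := by
    intro ℓ h
    have hall : ∀ φ : ℝ, F φ ℓ = 0 := fun φ => hFz φ ℓ h
    simp [hm ℓ, hall]
  have contF : ∀ ℓ : ℤ × ℤ, Continuous fun φ : ℝ => (F φ ℓ : ℂ) := by
    intro ℓ
    have hfe : (fun φ : ℝ => (F φ ℓ : ℂ)) = fun φ : ℝ =>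
        ∑ ν ∈ Finset.Icc (-(V : ℤ)) (V : ℤ), g ν ℓ * Complex.exp (Complex.I * (ν : ℂ) * (φ : ℂ)) :=
      funext fun φ => hF.2 φ ℓ
    rw [hfe]
    exact continuous_finset_sum _ fun ν _ => continuous_const.mul
      (Complex.continuous_exp.comp (continuous_const.mul Complex.continuous_ofReal))
  have hshift : ∀ (ℓ a : ℤ × ℤ), ℓ ∈ box n → a ∉ box (2 * n) → ℓ + a ∉ box n := by
    intro ℓ a hℓ ha hmem
    rw [mem_box] at hℓ hmem ha
    simp only [Prod.fst_add, Prod.snd_add] at hmem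
    push_cast at ha hℓ hmem
    omega
  -- finite-sum forms of the transforms
  have hFhatB : ∀ (φ : ℝ) (k : ℤ × ℤ), Fhat φ k = ∑ ℓ ∈ box n, (F φ ℓ : ℂ) * dftPhase n ℓ k := by
    intro φ k
    rw [hFhat φ k]
    exact tsum_eq_sum fun ℓ h => by rw [hFz φ ℓ h]; simp
  have hmhatB : ∀ k : ℤ × ℤ, mhat k = ∑ ℓ ∈ box n, (m ℓ : ℂ) * dftPhase n ℓ k := by
    intro k
    rw [hmhat k]
    exact tsum_eq_sum fun ℓ h => by rw [hmz ℓ h]; simp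
  -- finite inner sum for S3pair
  have hS' : ∀ a b : ℤ × ℤ, S3pair a b =
      1 / (4 * (n : ℝ) ^ 2) * (1 / (2 * π) *
        ∫ φ in (0:ℝ)..(2 * π), ∑ ℓ ∈ box n, F φ ℓ * F φ (ℓ + a) * m (ℓ + b)) := by
    intro a b
    rw [hS3pair a b]
    congr 2
    apply integral_congr
    intro φ _
    exact tsum_eq_sum fun ℓ h => by rw [hFz φ ℓ h]; simp
  -- vanishing of S3pair outside box (2n) × box (2n)
  have hSzero : ∀ a b : ℤ × ℤ, a ∉ box (2 * n) ∨ b ∉ box (2 * n) → S3pair a b = 0 := by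
    intro a b hab
    rw [hS' a b]
    have h0 : ∀ φ : ℝ, (∑ ℓ ∈ box n, F φ ℓ * F φ (ℓ + a) * m (ℓ + b)) = 0 := by
      intro φ
      apply Finset.sum_eq_zero
      intro ℓ hℓ
      rcases hab with ha | hb
      · rw [hFz φ (ℓ + a) (hshift ℓ a hℓ ha)]; ring
      · rw [hmz (ℓ + b) (hshift ℓ b hℓ hb)]; ring
    simp [h0]
  -- the reindexing claims
  have claimA : ∀ (φ : ℝ) (ℓ : ℤ × ℤ), ℓ ∈ box n →
      dftPhase n ℓ k₁ * ∑ a ∈ box (2 * n), (F φ (ℓ + a) : ℂ) * dftPhase n a k₁ = Fhat φ k₁ := by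
    intro φ ℓ hℓ
    rw [Finset.mul_sum]
    rw [Finset.sum_congr rfl (fun a _ => by
      rw [dftPhase_add_left n ℓ a k₁]; ring :
      ∀ a ∈ box (2 * n), dftPhase n ℓ k₁ * ((F φ (ℓ + a) : ℂ) * dftPhase n a k₁)
        = (F φ (ℓ + a) : ℂ) * dftPhase n (ℓ + a) k₁)]
    rw [← tsum_eq_sum (L := SummationFilter.unconditional _) (s := box (2 * n))
      (f := fun a => (F φ (ℓ + a) : ℂ) * dftPhase n (ℓ + a) k₁)
      (fun a ha => by
        show (F φ (ℓ + a) : ℂ) * dftPhase n (ℓ + a) k₁ = 0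
        rw [hFz φ (ℓ + a) (hshift ℓ a hℓ ha)]; simp)]
    rw [hFhat φ k₁]
    exact (Equiv.addLeft ℓ).tsum_eq fun x => (F φ x : ℂ) * dftPhase n x k₁
  have claimB : ∀ ℓ : ℤ × ℤ, ℓ ∈ box n →
      dftPhase n ℓ k₂ * ∑ b ∈ box (2 * n), (m (ℓ + b) : ℂ) * dftPhase n b k₂ = mhat k₂ := by
    intro ℓ hℓ
    rw [Finset.mul_sum]
    rw [Finset.sum_congr rfl (fun b _ => by
      rw [dftPhase_add_left n ℓ b k₂]; ring :
      ∀ b ∈ box (2 * n), dftPhase n ℓ k₂ * ((m (ℓ + b) : ℂ) * dftPhase n b k₂)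
        = (m (ℓ + b) : ℂ) * dftPhase n (ℓ + b) k₂)]
    rw [← tsum_eq_sum (L := SummationFilter.unconditional _) (s := box (2 * n))
      (f := fun b => (m (ℓ + b) : ℂ) * dftPhase n (ℓ + b) k₂)
      (fun b hb => by
        show (m (ℓ + b) : ℂ) * dftPhase n (ℓ + b) k₂ = 0
        rw [hmz (ℓ + b) (hshift ℓ b hℓ hb)]; simp)]
    rw [hmhat k₂]
    exact (Equiv.addLeft ℓ).tsum_eq fun x => (m x : ℂ) * dftPhase n x k₂
  -- pointwise core identity
  have core : ∀ φ : ℝ,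
      (∑ ab ∈ box (2 * n) ×ˢ box (2 * n),
        (∑ ℓ ∈ box n, (F φ ℓ : ℂ) * (F φ (ℓ + ab.1) : ℂ) * (m (ℓ + ab.2) : ℂ)) *
          dftPhase n ab.1 k₁ * dftPhase n ab.2 k₂)
      = Fhat φ k₁ * Fhat φ k₃ * mhat k₂ := by
    intro φ
    rw [Finset.sum_product]
    calc
      ∑ a ∈ box (2 * n), ∑ b ∈ box (2 * n),
          (∑ ℓ ∈ box n, (F φ ℓ : ℂ) * (F φ (ℓ + a) : ℂ) * (m (ℓ + b) : ℂ)) *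
            dftPhase n a k₁ * dftPhase n b k₂
        = ∑ a ∈ box (2 * n), ∑ b ∈ box (2 * n), ∑ ℓ ∈ box n,
            (F φ ℓ : ℂ) * (((F φ (ℓ + a) : ℂ) * dftPhase n a k₁) *
              ((m (ℓ + b) : ℂ) * dftPhase n b k₂)) := by
          refine Finset.sum_congr rfl fun a _ => Finset.sum_congr rfl fun b _ => ?_
          rw [Finset.sum_mul, Finset.sum_mul]
          exact Finset.sum_congr rfl fun ℓ _ => by ring
      _ = ∑ a ∈ box (2 * n), ∑ ℓ ∈ box n, ∑ b ∈ box (2 * n),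
            (F φ ℓ : ℂ) * (((F φ (ℓ + a) : ℂ) * dftPhase n a k₁) *
              ((m (ℓ + b) : ℂ) * dftPhase n b k₂)) :=
          Finset.sum_congr rfl fun a _ => Finset.sum_comm
      _ = ∑ ℓ ∈ box n, ∑ a ∈ box (2 * n), ∑ b ∈ box (2 * n),
            (F φ ℓ : ℂ) * (((F φ (ℓ + a) : ℂ) * dftPhase n a k₁) *
              ((m (ℓ + b) : ℂ) * dftPhase n b k₂)) := Finset.sum_comm
      _ = ∑ ℓ ∈ box n, (F φ ℓ : ℂ) *
            ((∑ a ∈ box (2 * n), (F φ (ℓ + a) : ℂ) * dftPhase n a k₁) *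
             (∑ b ∈ box (2 * n), (m (ℓ + b) : ℂ) * dftPhase n b k₂)) := by
          refine Finset.sum_congr rfl fun ℓ _ => ?_
          rw [Finset.sum_mul_sum, Finset.mul_sum]
          refine Finset.sum_congr rfl fun a _ => ?_
          rw [Finset.mul_sum]
      _ = ∑ ℓ ∈ box n, ((F φ ℓ : ℂ) * dftPhase n ℓ k₃) * (Fhat φ k₁ * mhat k₂) := by
          refine Finset.sum_congr rfl fun ℓ hℓ => ?_
          rw [← claimA φ ℓ hℓ, ← claimB ℓ hℓ]
          have hone : dftPhase n ℓ k₃ * (dftPhase n ℓ k₁ * dftPhase n ℓ k₂) = 1 := by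
            rw [← dftPhase_add_right, ← dftPhase_add_right,
              show k₃ + (k₁ + k₂) = 0 by rw [hk₃]; ring, dftPhase_zero_right]
          linear_combination (-((F φ ℓ : ℂ) *
            (∑ a ∈ box (2 * n), (F φ (ℓ + a) : ℂ) * dftPhase n a k₁) *
            (∑ b ∈ box (2 * n), (m (ℓ + b) : ℂ) * dftPhase n b k₂))) * hone
      _ = (∑ ℓ ∈ box n, (F φ ℓ : ℂ) * dftPhase n ℓ k₃) * (Fhat φ k₁ * mhat k₂) := by
          rw [Finset.sum_mul]
      _ = Fhat φ k₁ * Fhat φ k₃ * mhat k₂ := by rw [← hFhatB φ k₃]; ring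
  -- per-term casting
  have hterm : ∀ a b : ℤ × ℤ, (S3pair a b : ℂ) * dftPhase n a k₁ * dftPhase n b k₂
      = 1 / (4 * (n : ℂ) ^ 2) * (1 / (2 * (π : ℂ)) *
        ∫ φ in (0:ℝ)..(2 * π),
          (∑ ℓ ∈ box n, (F φ ℓ : ℂ) * (F φ (ℓ + a) : ℂ) * (m (ℓ + b) : ℂ)) *
            dftPhase n a k₁ * dftPhase n b k₂) := by
    intro a b
    have hcast : ∀ φ : ℝ, ((∑ ℓ ∈ box n, F φ ℓ * F φ (ℓ + a) * m (ℓ + b) : ℝ) : ℂ)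
        = ∑ ℓ ∈ box n, (F φ ℓ : ℂ) * (F φ (ℓ + a) : ℂ) * (m (ℓ + b) : ℂ) := by
      intro φ; push_cast; ring
    have h1 : (∫ φ in (0:ℝ)..(2 * π),
          (∑ ℓ ∈ box n, (F φ ℓ : ℂ) * (F φ (ℓ + a) : ℂ) * (m (ℓ + b) : ℂ)) *
            dftPhase n a k₁ * dftPhase n b k₂)
        = ((∫ φ in (0:ℝ)..(2 * π), ∑ ℓ ∈ box n, F φ ℓ * F φ (ℓ + a) * m (ℓ + b) : ℝ) : ℂ) *
            (dftPhase n a k₁ * dftPhase n b k₂) := by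
      have e1 : (∫ φ in (0:ℝ)..(2 * π),
            (∑ ℓ ∈ box n, (F φ ℓ : ℂ) * (F φ (ℓ + a) : ℂ) * (m (ℓ + b) : ℂ)) *
              dftPhase n a k₁ * dftPhase n b k₂)
          = ∫ φ in (0:ℝ)..(2 * π),
              ((∑ ℓ ∈ box n, F φ ℓ * F φ (ℓ + a) * m (ℓ + b) : ℝ) : ℂ) •
                (dftPhase n a k₁ * dftPhase n b k₂) := by
        apply integral_congr
        intro φ _
        simp only [smul_eq_mul]
        rw [hcast φ]
        ring
      rw [e1, intervalIntegral.integral_smul_const, intervalIntegral.integral_ofReal,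
        smul_eq_mul]
    rw [h1, hS' a b]
    push_cast
    ring
  -- integrability
  have hint : ∀ ab ∈ box (2 * n) ×ˢ box (2 * n), IntervalIntegrable
      (fun φ : ℝ => (∑ ℓ ∈ box n, (F φ ℓ : ℂ) * (F φ (ℓ + ab.1) : ℂ) * (m (ℓ + ab.2) : ℂ)) *
        dftPhase n ab.1 k₁ * dftPhase n ab.2 k₂) volume 0 (2 * π) := by
    intro ab _
    exact (((continuous_finset_sum _ fun ℓ _ =>
      ((contF ℓ).mul (contF (ℓ + ab.1))).mul continuous_const).mul
        continuous_const).mul continuous_const).intervalIntegrable 0 (2 * π)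
  -- main evaluation of the LHS
  have h1 : (∑' ab : (ℤ × ℤ) × (ℤ × ℤ),
        (S3pair ab.1 ab.2 : ℂ) * dftPhase n ab.1 k₁ * dftPhase n ab.2 k₂)
      = 1 / (4 * (n : ℂ) ^ 2) * mhat k₂ *
          (1 / (2 * (π : ℂ)) * ∫ φ in (0:ℝ)..(2 * π), Fhat φ k₁ * Fhat φ k₃) := by
    rw [tsum_eq_sum (s := box (2 * n) ×ˢ box (2 * n)) (fun ab hab => by
      rw [hSzero ab.1 ab.2 (by rw [Finset.mem_product, not_and_or] at hab; exact hab)]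
      simp)]
    calc
      ∑ ab ∈ box (2 * n) ×ˢ box (2 * n),
          (S3pair ab.1 ab.2 : ℂ) * dftPhase n ab.1 k₁ * dftPhase n ab.2 k₂
        = ∑ ab ∈ box (2 * n) ×ˢ box (2 * n), 1 / (4 * (n : ℂ) ^ 2) * (1 / (2 * (π : ℂ)) *
            ∫ φ in (0:ℝ)..(2 * π),
              (∑ ℓ ∈ box n, (F φ ℓ : ℂ) * (F φ (ℓ + ab.1) : ℂ) * (m (ℓ + ab.2) : ℂ)) *
                dftPhase n ab.1 k₁ * dftPhase n ab.2 k₂) :=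
          Finset.sum_congr rfl fun ab _ => hterm ab.1 ab.2
      _ = 1 / (4 * (n : ℂ) ^ 2) * (1 / (2 * (π : ℂ)) *
            ∑ ab ∈ box (2 * n) ×ˢ box (2 * n), ∫ φ in (0:ℝ)..(2 * π),
              (∑ ℓ ∈ box n, (F φ ℓ : ℂ) * (F φ (ℓ + ab.1) : ℂ) * (m (ℓ + ab.2) : ℂ)) *
                dftPhase n ab.1 k₁ * dftPhase n ab.2 k₂) := by
          rw [Finset.mul_sum, Finset.mul_sum]
      _ = 1 / (4 * (n : ℂ) ^ 2) * (1 / (2 * (π : ℂ)) *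
            ∫ φ in (0:ℝ)..(2 * π), ∑ ab ∈ box (2 * n) ×ˢ box (2 * n),
              (∑ ℓ ∈ box n, (F φ ℓ : ℂ) * (F φ (ℓ + ab.1) : ℂ) * (m (ℓ + ab.2) : ℂ)) *
                dftPhase n ab.1 k₁ * dftPhase n ab.2 k₂) := by
          rw [intervalIntegral.integral_finset_sum hint]
      _ = 1 / (4 * (n : ℂ) ^ 2) * (1 / (2 * (π : ℂ)) *
            ∫ φ in (0:ℝ)..(2 * π), (Fhat φ k₁ * Fhat φ k₃) • mhat k₂) := by
          congr 2
          apply integral_congr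
          intro φ _
          simp only [smul_eq_mul]
          exact core φ
      _ = 1 / (4 * (n : ℂ) ^ 2) * mhat k₂ *
            (1 / (2 * (π : ℂ)) * ∫ φ in (0:ℝ)..(2 * π), Fhat φ k₁ * Fhat φ k₃) := by
          rw [intervalIntegral.integral_smul_const, smul_eq_mul]
          ring
  -- quadrature exactness
  have hIcc : ∀ p : ℤ × ℤ, p ∈ Finset.Icc (-(V:ℤ)) (V:ℤ) ×ˢ Finset.Icc (-(V:ℤ)) (V:ℤ) →
      |p.1 + p.2| ≤ 2 * (V:ℤ) := by
    intro p hp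
    rw [Finset.mem_product, Finset.mem_Icc, Finset.mem_Icc] at hp
    rw [abs_le]
    omega
  have hFexp : ∀ (φ : ℝ) (k : ℤ × ℤ), Fhat φ k =
      ∑ ν ∈ Finset.Icc (-(V:ℤ)) (V:ℤ),
        (∑ ℓ ∈ box n, g ν ℓ * dftPhase n ℓ k) * Complex.exp (Complex.I * (ν:ℂ) * (φ:ℂ)) := by
    intro φ k
    rw [hFhatB φ k]
    calc
      ∑ ℓ ∈ box n, (F φ ℓ : ℂ) * dftPhase n ℓ k
        = ∑ ℓ ∈ box n, ∑ ν ∈ Finset.Icc (-(V:ℤ)) (V:ℤ),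
            g ν ℓ * dftPhase n ℓ k * Complex.exp (Complex.I * (ν:ℂ) * (φ:ℂ)) := by
          refine Finset.sum_congr rfl fun ℓ _ => ?_
          rw [hF.2 φ ℓ, Finset.sum_mul]
          exact Finset.sum_congr rfl fun ν _ => by ring
      _ = ∑ ν ∈ Finset.Icc (-(V:ℤ)) (V:ℤ), ∑ ℓ ∈ box n,
            g ν ℓ * dftPhase n ℓ k * Complex.exp (Complex.I * (ν:ℂ) * (φ:ℂ)) :=
          Finset.sum_comm
      _ = ∑ ν ∈ Finset.Icc (-(V:ℤ)) (V:ℤ),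
            (∑ ℓ ∈ box n, g ν ℓ * dftPhase n ℓ k) * Complex.exp (Complex.I * (ν:ℂ) * (φ:ℂ)) := by
          exact Finset.sum_congr rfl fun ν _ => (Finset.sum_mul _ _ _).symm
  have hprod : ∀ φ : ℝ, Fhat φ k₁ * Fhat φ k₃ =
      ∑ p ∈ Finset.Icc (-(V:ℤ)) (V:ℤ) ×ˢ Finset.Icc (-(V:ℤ)) (V:ℤ),
        ((∑ ℓ ∈ box n, g p.1 ℓ * dftPhase n ℓ k₁) * (∑ ℓ ∈ box n, g p.2 ℓ * dftPhase n ℓ k₃)) *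
          Complex.exp (Complex.I * ((p.1 + p.2 : ℤ) : ℂ) * (φ:ℂ)) := by
    intro φ
    rw [hFexp φ k₁, hFexp φ k₃, Finset.sum_mul_sum, ← Finset.sum_product']
    refine Finset.sum_congr rfl fun p _ => ?_
    have he : Complex.exp (Complex.I * (p.1:ℂ) * (φ:ℂ)) *
        Complex.exp (Complex.I * (p.2:ℂ) * (φ:ℂ)) =
        Complex.exp (Complex.I * ((p.1 + p.2 : ℤ) : ℂ) * (φ:ℂ)) := by
      rw [← Complex.exp_add]
      congr 1
      push_cast
      ring
    linear_combination ((∑ ℓ ∈ box n, g p.1 ℓ * dftPhase n ℓ k₁) *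
      (∑ ℓ ∈ box n, g p.2 ℓ * dftPhase n ℓ k₃)) * he
  have hint2 : ∀ p ∈ Finset.Icc (-(V:ℤ)) (V:ℤ) ×ˢ Finset.Icc (-(V:ℤ)) (V:ℤ),
      IntervalIntegrable (fun φ : ℝ =>
        ((∑ ℓ ∈ box n, g p.1 ℓ * dftPhase n ℓ k₁) * (∑ ℓ ∈ box n, g p.2 ℓ * dftPhase n ℓ k₃)) *
          Complex.exp (Complex.I * ((p.1 + p.2 : ℤ) : ℂ) * (φ:ℂ))) volume 0 (2 * π) := by
    intro p _
    exact (continuous_const.mul (Complex.continuous_exp.comp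
      (continuous_const.mul Complex.continuous_ofReal))).intervalIntegrable 0 (2 * π)
  have hE : (1 / (2 * (π : ℂ)) * ∫ φ in (0:ℝ)..(2 * π), Fhat φ k₁ * Fhat φ k₃)
      = 1 / (4 * (V : ℂ)) * ∑ ν ∈ Finset.range (4 * V),
          Fhat (2 * π * (ν : ℝ) / (4 * (V : ℝ))) k₁ * Fhat (2 * π * (ν : ℝ) / (4 * (V : ℝ))) k₃ := by
    calc
      1 / (2 * (π : ℂ)) * ∫ φ in (0:ℝ)..(2 * π), Fhat φ k₁ * Fhat φ k₃
        = 1 / (2 * (π : ℂ)) * ∫ φ in (0:ℝ)..(2 * π),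
            ∑ p ∈ Finset.Icc (-(V:ℤ)) (V:ℤ) ×ˢ Finset.Icc (-(V:ℤ)) (V:ℤ),
              ((∑ ℓ ∈ box n, g p.1 ℓ * dftPhase n ℓ k₁) *
                (∑ ℓ ∈ box n, g p.2 ℓ * dftPhase n ℓ k₃)) *
                Complex.exp (Complex.I * ((p.1 + p.2 : ℤ) : ℂ) * (φ:ℂ)) := by
          rw [integral_congr fun φ _ => hprod φ]
      _ = ∑ p ∈ Finset.Icc (-(V:ℤ)) (V:ℤ) ×ˢ Finset.Icc (-(V:ℤ)) (V:ℤ),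
            ((∑ ℓ ∈ box n, g p.1 ℓ * dftPhase n ℓ k₁) *
              (∑ ℓ ∈ box n, g p.2 ℓ * dftPhase n ℓ k₃)) *
              (1 / (2 * (π : ℂ)) * ∫ φ in (0:ℝ)..(2 * π),
                Complex.exp (Complex.I * ((p.1 + p.2 : ℤ) : ℂ) * (φ:ℂ))) := by
          rw [intervalIntegral.integral_finset_sum hint2, Finset.mul_sum]
          refine Finset.sum_congr rfl fun p _ => ?_
          rw [intervalIntegral.integral_const_mul]
          ring
      _ = ∑ p ∈ Finset.Icc (-(V:ℤ)) (V:ℤ) ×ˢ Finset.Icc (-(V:ℤ)) (V:ℤ),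
            ((∑ ℓ ∈ box n, g p.1 ℓ * dftPhase n ℓ k₁) *
              (∑ ℓ ∈ box n, g p.2 ℓ * dftPhase n ℓ k₃)) *
              (1 / (4 * (V : ℂ)) * ∑ ν ∈ Finset.range (4 * V),
                Complex.exp (Complex.I * ((p.1 + p.2 : ℤ) : ℂ) *
                  ((2 * π * (ν:ℝ) / (4 * (V:ℝ)) : ℝ) : ℂ))) := by
          refine Finset.sum_congr rfl fun p hp => ?_
          rw [key_quad V hV (p.1 + p.2) (hIcc p hp)]
      _ = 1 / (4 * (V : ℂ)) * ∑ ν ∈ Finset.range (4 * V),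
            Fhat (2 * π * (ν : ℝ) / (4 * (V : ℝ))) k₁ *
              Fhat (2 * π * (ν : ℝ) / (4 * (V : ℝ))) k₃ := by
          simp only [hprod]
          rw [Finset.mul_sum]
          simp only [Finset.mul_sum]
          rw [Finset.sum_comm]
          refine Finset.sum_congr rfl fun p _ => Finset.sum_congr rfl fun ν _ => by ring
  exact ⟨h1, h1.trans (by rw [hE])⟩
end
end

section
/- Let F be a steerable image family of radius n and angular bandlimit V, and consider the measurement model with N > 6n, translations t₁,…,t_p ∈ {3n,…,N−3n−1}² satisfying the separation condition ‖t_i − t_j‖_∞ ≥ 4n for all i ≠ j. Then for all u, v ∈ L = {0,…,2n−1}², E[A³_M[u,v]] = γ·S₃[u,v] + γ·S₁·σ²·(δ[u] + δ[v] + δ[u−v]), where A³_M[u,v] := (1/N²)·Σ_{j∈ℤ²} M[j]M[j+u]M[j+v], S₁ := (1/(4n²))·(1/2π)∫₀^{2π} Σ_{ℓ∈ℤ²} F_φ[ℓ] dφ, S₃[u,v] := (1/(4n²))·(1/2π)∫₀^{2π} Σ_{ℓ∈ℤ²} F_φ[ℓ]F_φ[ℓ+u]F_φ[ℓ+v] dφ,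 γ := 4pn²/N², and δ is the Kronecker delta on ℤ². -/
open Real MeasureTheory ProbabilityTheory intervalIntegral
open scoped NNReal ENNReal

noncomputable section

/-- Membership in the grid `{0,…,N−1}²`. -/
def InGrid (N : ℕ) (ℓ : ℤ × ℤ) : Prop :=
  0 ≤ ℓ.1 ∧ ℓ.1 ≤ (N : ℤ) - 1 ∧ 0 ≤ ℓ.2 ∧ ℓ.2 ≤ (N : ℤ) - 1

instance (N : ℕ) (ℓ : ℤ × ℤ) : Decidable (InGrid N ℓ) := by
  unfold InGrid; infer_instance

open scoped NNReal ENNReal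

/-!
The measurement is `M = S + ε` on the grid, where `S[ℓ] = Σᵢ F_{φᵢ}[ℓ - tᵢ]` is the clean image and
`ε` is white Gaussian noise independent of the rotations. Expanding `M[j] M[j+u] M[j+v]`, the terms
with one or three noise factors have mean zero, and each term with two noise factors contributes
`σ²` times the mean of the remaining signal factor exactly when the two noise indices coincide,
i.e. when `u = 0`, `v = 0` or `u = v`. In the pure signal term the separation `‖tᵢ - tⱼ‖∞ ≥ 4n`
and `u, v ∈ {0,…,2n-1}²` make all products of different translates vanish, so only
`Σᵢ F_{φᵢ}[j-tᵢ] F_{φᵢ}[j+u-tᵢ] F_{φᵢ}[j+v-tᵢ]` survives, whose mean over a uniform rotation is an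
angular average. Since every translate lies inside the grid, summing over `j` turns each of the
`p` translates into a full sum over `ℤ²`, which produces the factor `p = γ N² / (4n²)`.
-/

theorem Finset.sum_mul_sum_of_mul_eq_zero {ι R : Type*} [NonUnitalNonAssocSemiring R]
    (s : Finset ι) (f g : ι → R) (h : ∀ i ∈ s, ∀ j ∈ s, i ≠ j → f i * g j = 0) :
    (∑ i ∈ s, f i) * ∑ j ∈ s, g j = ∑ i ∈ s, f i * g i := by
  rw [Finset.sum_mul_sum]
  exact Finset.sum_congr rfl fun i hi ↦
    Finset.sum_eq_single_of_mem i hi fun j hj hji ↦ h i hi j hj (Ne.symm hji)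

theorem Finset.sum_sub_eq_tsum {α M : Type*} [AddCommGroup α] [AddCommMonoid M]
    [TopologicalSpace M] (s : Finset α) {h : α → M} {w : α} (hs : ∀ a, h a ≠ 0 → a + w ∈ s) :
    ∑ j ∈ s, h (j - w) = ∑' a, h a :=
  calc ∑ j ∈ s, h (j - w) = ∑' j, h (j - w) :=
        (tsum_eq_sum fun j hj ↦ by_contra fun hne ↦ hj (by simpa using hs _ hne)).symm
    _ = ∑' a, h a := (Equiv.subRight w).tsum_eq h

section Probability

variable {Ω : Type*} {mΩ : MeasurableSpace Ω} {μ : Measure Ω}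

theorem integral_sq_gaussianReal_zero (v : ℝ≥0) : ∫ x, x ^ 2 ∂gaussianReal 0 v = v := by
  simpa [variance_eq_integral measurable_id'.aemeasurable] using
    variance_fun_id_gaussianReal (μ := 0) (v := v)

theorem integral_pow_three_gaussianReal_zero (v : ℝ≥0) : ∫ x, x ^ 3 ∂gaussianReal 0 v = 0 := by
  have h : ∫ x, (-x) ^ 3 ∂gaussianReal 0 v = ∫ x, x ^ 3 ∂gaussianReal 0 v := by
    conv_rhs => rw [← neg_zero, ← gaussianReal_map_neg]
    rw [integral_map (by fun_prop) (by fun_prop)]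
  simp only [Odd.neg_pow (by decide : Odd 3), MeasureTheory.integral_neg] at h
  linarith

theorem ProbabilityTheory.HasLaw.memLp_of_gaussianReal {X : Ω → ℝ} {m : ℝ} {v : ℝ≥0}
    (hX : HasLaw X (gaussianReal m v) μ) (p : ℝ≥0) : MemLp X p μ := by
  have h := memLp_id_gaussianReal (μ := m) (v := v) p
  rw [← hX.map_eq] at h
  exact (memLp_map_measure_iff aestronglyMeasurable_id hX.aemeasurable).1 h

theorem integrable_mul_mul_of_memLp_three {f g h : Ω → ℝ} (hf : MemLp f 3 μ) (hg : MemLp g 3 μ)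
    (hh : MemLp h 3 μ) : Integrable (fun ω ↦ f ω * g ω * h ω) μ := by
  have cube {k : Ω → ℝ} (hk : MemLp k 3 μ) : Integrable (fun ω ↦ |k ω| ^ 3) μ := by
    simpa using hk.integrable_norm_pow (p := 3) three_ne_zero
  refine ((cube hf).add ((cube hg).add (cube hh))).mono' ((hf.1.mul hg.1).mul hh.1)
    (ae_of_all _ fun ω ↦ ?_)
  have amgm (x y z : ℝ) (hx : 0 ≤ x) (hy : 0 ≤ y) (hz : 0 ≤ z) :
      x * y * z ≤ x ^ 3 + (y ^ 3 + z ^ 3) := by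
    nlinarith [mul_nonneg (add_nonneg (add_nonneg hx hy) hz) (add_nonneg (add_nonneg
      (sq_nonneg (x - y)) (sq_nonneg (y - z))) (sq_nonneg (z - x))),
      mul_nonneg (mul_nonneg hx hy) hz]
  simpa [abs_mul] using amgm _ _ _ (abs_nonneg (f ω)) (abs_nonneg (g ω)) (abs_nonneg (h ω))

section IndependentGaussians

variable {ι : Type*} [DecidableEq ι] {Y : ι → Ω → ℝ} {v : ι → ℝ≥0}

theorem integral_mul_of_iIndepFun_gaussianReal (hY : iIndepFun Y μ)
    (hlaw : ∀ a, HasLaw (Y a) (gaussianReal 0 (v a)) μ) (a b : ι) :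
    ∫ ω, Y a ω * Y b ω ∂μ = if a = b then (v a : ℝ) else 0 := by
  split_ifs with hab
  · subst hab
    have := (hlaw a).integral_comp (f := fun x ↦ x ^ 2) (by fun_prop)
    rw [integral_sq_gaussianReal_zero] at this
    simpa [Function.comp_def, sq] using this
  · rw [(hY.indepFun hab).integral_fun_mul_eq_mul_integral
      (hlaw a).aemeasurable.aestronglyMeasurable (hlaw b).aemeasurable.aestronglyMeasurable,
      (hlaw a).integral_eq, integral_id_gaussianReal, zero_mul]

theorem integral_mul_mul_of_iIndepFun_gaussianReal (hY : iIndepFun Y μ)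
    (hlaw : ∀ a, HasLaw (Y a) (gaussianReal 0 (v a)) μ) (a b c : ι) :
    ∫ ω, Y a ω * Y b ω * Y c ω ∂μ = 0 := by
  have hsplit {a b c : ι} (hca : c ≠ a) (hcb : c ≠ b) : ∫ ω, Y a ω * Y b ω * Y c ω ∂μ = 0 := by
    have := (hY.indepFun_mul_left₀ (fun i ↦ (hlaw i).aemeasurable) a b c hca.symm
      hcb.symm).integral_mul_eq_mul_integral (((hlaw a).aemeasurable.mul
      (hlaw b).aemeasurable).aestronglyMeasurable) (hlaw c).aemeasurable.aestronglyMeasurable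
    simpa [(hlaw c).integral_eq] using this
  by_cases hca : c = a <;> by_cases hcb : c = b
  · subst hca hcb
    have := (hlaw c).integral_comp (f := fun x ↦ x ^ 3) (by fun_prop)
    rw [integral_pow_three_gaussianReal_zero] at this
    rw [← this]
    congr with ω
    simp only [Function.comp_apply]
    ring
  · subst hca
    simpa only [mul_right_comm] using hsplit (Ne.symm hcb) (Ne.symm hcb)
  · subst hcb
    simpa only [mul_comm, mul_left_comm] using hsplit (b := c) (Ne.symm hca) (Ne.symm hca)
  · exact hsplit hca hcb

end IndependentGaussians

theorem ProbabilityTheory.Indep.indepFun_of_measurable {β γ : Type*} [MeasurableSpace β]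
    [MeasurableSpace γ] {m₁ m₂ : MeasurableSpace Ω} (h : Indep m₁ m₂ μ) {f : Ω → β} {g : Ω → γ}
    (hf : Measurable[m₁] f) (hg : Measurable[m₂] g) : IndepFun f g μ :=
  (IndepFun_iff_Indep f g μ).2
    (indep_of_indep_of_le_left (indep_of_indep_of_le_right h hg.comap_le) hf.comap_le)

theorem ProbabilityTheory.iIndepFun.indep_iSup_comap_sum_elim {β ι κ : Type*}
    [MeasurableSpace β] {X : ι → Ω → β} {Y : κ → Ω → β} (h : iIndepFun (Sum.elim X Y) μ)
    (hX : ∀ i, Measurable (X i)) (hY : ∀ j, Measurable (Y j)) :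
    Indep (⨆ i, MeasurableSpace.comap (X i) ‹_›) (⨆ j, MeasurableSpace.comap (Y j) ‹_›) μ := by
  have := indep_iSup_of_disjoint
    (fun k ↦ Sum.rec (fun i ↦ (hX i).comap_le) (fun j ↦ (hY j).comap_le) k)
    h.iIndep Set.isCompl_range_inl_range_inr.disjoint
  rw [iSup_range, iSup_range] at this
  simpa using this

theorem integral_add_mul_add_mul_add_of_indep {m₁ m₂ : MeasurableSpace Ω} (hm₁ : m₁ ≤ mΩ)
    (hm₂ : m₂ ≤ mΩ) (hind : Indep m₁ m₂ μ) {ι : Type*} {X Y : ι → Ω → ℝ}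
    (hXm : ∀ a, Measurable[m₁] (X a)) (hYm : ∀ a, Measurable[m₂] (Y a))
    (hX : ∀ a, MemLp (X a) 3 μ) (hY : ∀ a, MemLp (Y a) 3 μ) (hY₁ : ∀ a, ∫ ω, Y a ω ∂μ = 0)
    {a b c : ι} (hY₃ : ∫ ω, Y a ω * Y b ω * Y c ω ∂μ = 0) :
    ∫ ω, (X a ω + Y a ω) * (X b ω + Y b ω) * (X c ω + Y c ω) ∂μ =
      ∫ ω, X a ω * X b ω * X c ω ∂μ + (∫ ω, X a ω ∂μ) * (∫ ω, Y b ω * Y c ω ∂μ) +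
        (∫ ω, X b ω ∂μ) * (∫ ω, Y a ω * Y c ω ∂μ) +
        (∫ ω, X c ω ∂μ) * ∫ ω, Y a ω * Y b ω ∂μ := by
  have hXXY (a b c : ι) : ∫ ω, X a ω * X b ω * Y c ω ∂μ = 0 := by
    have := (hind.indepFun_of_measurable ((hXm a).mul (hXm b)) (hYm c)
      ).integral_fun_mul_eq_mul_integral
      (((hXm a).mul (hXm b)).mono hm₁ le_rfl).aestronglyMeasurable
      ((hYm c).mono hm₂ le_rfl).aestronglyMeasurable
    simpa [hY₁] using this
  have hXYY (a b c : ι) :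
      ∫ ω, X a ω * Y b ω * Y c ω ∂μ = (∫ ω, X a ω ∂μ) * ∫ ω, Y b ω * Y c ω ∂μ := by
    simp_rw [mul_assoc]
    exact (hind.indepFun_of_measurable (hXm a) ((hYm b).mul (hYm c))
      ).integral_fun_mul_eq_mul_integral ((hXm a).mono hm₁ le_rfl).aestronglyMeasurable
      (((hYm b).mul (hYm c)).mono hm₂ le_rfl).aestronglyMeasurable
  have expand (ω : Ω) : (X a ω + Y a ω) * (X b ω + Y b ω) * (X c ω + Y c ω) =
      X a ω * X b ω * X c ω + X a ω * X b ω * Y c ω + X a ω * X c ω * Y b ω +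
        X b ω * X c ω * Y a ω + X a ω * Y b ω * Y c ω + X b ω * Y a ω * Y c ω +
        X c ω * Y a ω * Y b ω + Y a ω * Y b ω * Y c ω := by ring
  simp_rw [expand]
  rw [MeasureTheory.integral_add, MeasureTheory.integral_add, MeasureTheory.integral_add,
    MeasureTheory.integral_add, MeasureTheory.integral_add, MeasureTheory.integral_add,
    MeasureTheory.integral_add, hXXY, hXXY, hXXY, hXYY, hXYY, hXYY, hY₃]
  · ring
  all_goals
    repeat' apply Integrable.fun_add
    all_goals first
      | exact integrable_mul_mul_of_memLp_three (hX _) (hX _) (hX _)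
      | exact integrable_mul_mul_of_memLp_three (hX _) (hX _) (hY _)
      | exact integrable_mul_mul_of_memLp_three (hX _) (hY _) (hY _)
      | exact integrable_mul_mul_of_memLp_three (hY _) (hY _) (hY _)

theorem integral_comp_of_map_eq_uniform {T : ℝ} (hT : 0 ≤ T) {X : Ω → ℝ} (hX : Measurable X)
    (hlaw : μ.map X = (ENNReal.ofReal T)⁻¹ • volume.restrict (Set.Ico 0 T)) {f : ℝ → ℝ}
    (hf : Measurable f) : ∫ ω, f (X ω) ∂μ = 1 / T * ∫ x in 0..T, f x := by
  rw [← integral_map hX.aemeasurable hf.aestronglyMeasurable, hlaw,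
    MeasureTheory.integral_smul_measure, integral_Ico_eq_integral_Ioo,
    ← integral_Ioc_eq_integral_Ioo, ← intervalIntegral.integral_of_le hT, ENNReal.toReal_inv,
    ENNReal.toReal_ofReal hT, smul_eq_mul, one_div]

end Probability

def supNorm (ℓ : ℤ × ℤ) : ℤ := max |ℓ.1| |ℓ.2|

theorem supNorm_neg (ℓ : ℤ × ℤ) : supNorm (-ℓ) = supNorm ℓ := by
  simp [supNorm]

theorem supNorm_add_le (a b : ℤ × ℤ) : supNorm (a + b) ≤ supNorm a + supNorm b :=
  max_le ((abs_add_le _ _).trans (add_le_add (le_max_left _ _) (le_max_left _ _)))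
    ((abs_add_le _ _).trans (add_le_add (le_max_right _ _) (le_max_right _ _)))

theorem supNorm_sub_le (a b c : ℤ × ℤ) : supNorm (a - c) ≤ supNorm (a - b) + supNorm (b - c) := by
  simpa using supNorm_add_le (a - b) (b - c)

theorem supNorm_sub_comm (a b : ℤ × ℤ) : supNorm (a - b) = supNorm (b - a) := by
  rw [← neg_sub, supNorm_neg]

def grid (N : ℕ) : Finset (ℤ × ℤ) := Finset.Icc 0 ((N : ℤ) - 1) ×ˢ Finset.Icc 0 ((N : ℤ) - 1)

theorem mem_grid {N : ℕ} {ℓ : ℤ × ℤ} : ℓ ∈ grid N ↔ InGrid N ℓ := by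
  simp [grid, InGrid, and_assoc]

theorem inGrid_of_supNorm_sub_le {n N : ℕ} {s ℓ : ℤ × ℤ}
    (hs : (3 * n : ℤ) ≤ s.1 ∧ s.1 ≤ (N : ℤ) - 3 * n - 1 ∧
      (3 * n : ℤ) ≤ s.2 ∧ s.2 ≤ (N : ℤ) - 3 * n - 1)
    (h : supNorm (ℓ - s) ≤ 3 * n) : InGrid N ℓ := by
  obtain ⟨h₁, h₂⟩ := max_le_iff.1 h
  rw [abs_le] at h₁ h₂
  simp only [Prod.fst_sub, Prod.snd_sub] at h₁ h₂
  refine ⟨?_, ?_, ?_, ?_⟩ <;> omega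

def box (r : ℕ) : Finset (ℤ × ℤ) := Finset.Icc (-(r : ℤ)) r ×ˢ Finset.Icc (-(r : ℤ)) r

theorem mem_box {r : ℕ} {ℓ : ℤ × ℤ} : ℓ ∈ box r ↔ supNorm ℓ ≤ r := by
  simp [box, supNorm, abs_le]

namespace Steerable

variable {n V : ℕ} {F : ℝ → ℤ × ℤ → ℝ} {g : ℤ → ℤ × ℤ → ℂ}

theorem eq_zero_of_lt_supNorm (hF : Steerable n V F g) (φ : ℝ) {ℓ : ℤ × ℤ}
    (h : (n : ℤ) < supNorm ℓ) : F φ ℓ = 0 := by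
  have := hF.2 φ ℓ
  rw [Finset.sum_eq_zero fun ν _ ↦ by rw [hF.1 ν ℓ h, zero_mul]] at this
  exact_mod_cast this

theorem eq_zero_of_notMem_box (hF : Steerable n V F g) (φ : ℝ) {ℓ : ℤ × ℤ} (h : ℓ ∉ box n) :
    F φ ℓ = 0 :=
  hF.eq_zero_of_lt_supNorm φ (not_le.1 (mt mem_box.2 h))

theorem supNorm_le_of_ne_zero (hF : Steerable n V F g) {φ : ℝ} {ℓ : ℤ × ℤ} (h : F φ ℓ ≠ 0) :
    supNorm ℓ ≤ n :=
  not_lt.1 fun h' ↦ h (hF.eq_zero_of_lt_supNorm φ h')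

theorem continuous (hF : Steerable n V F g) (ℓ : ℤ × ℤ) : Continuous fun φ ↦ F φ ℓ := by
  have : (fun φ ↦ F φ ℓ) = fun φ : ℝ ↦ (∑ ν ∈ Finset.Icc (-(V : ℤ)) V,
      g ν ℓ * Complex.exp (Complex.I * ν * φ)).re :=
    funext fun φ ↦ by rw [← hF.2, Complex.ofReal_re]
  rw [this]
  fun_prop

theorem abs_le (hF : Steerable n V F g) (φ : ℝ) (ℓ : ℤ × ℤ) :
    |F φ ℓ| ≤ ∑ ν ∈ Finset.Icc (-(V : ℤ)) V, ‖g ν ℓ‖ := by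
  rw [← Real.norm_eq_abs, ← Complex.norm_real, hF.2]
  refine (norm_sum_le _ _).trans (Finset.sum_le_sum fun ν _ ↦ ?_)
  rw [norm_mul, show Complex.I * ν * φ = ((ν * φ : ℝ) : ℂ) * Complex.I by push_cast; ring,
    Complex.norm_exp_ofReal_mul_I, mul_one]

theorem mul_eq_zero_of_le_supNorm_sub (hF : Steerable n V F g) (φ ψ : ℝ) {x y s s' : ℤ × ℤ}
    (hss' : 4 * (n : ℤ) ≤ supNorm (s - s')) (hxy : supNorm (x - y) < 2 * n) :
    F φ (x - s) * F ψ (y - s') = 0 := by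
  by_contra h
  obtain ⟨hx, hy⟩ := mul_ne_zero_iff.1 h
  have h₁ := supNorm_sub_le s x s'
  have h₂ := supNorm_sub_le x y s'
  rw [supNorm_sub_comm s x] at h₁
  linarith [hF.supNorm_le_of_ne_zero hx, hF.supNorm_le_of_ne_zero hy]

end Steerable

variable {ι : Type*} [Fintype ι]

def superposition (F : ℝ → ℤ × ℤ → ℝ) (t : ι → ℤ × ℤ) (φ : ι → ℝ) (ℓ : ℤ × ℤ) : ℝ :=
  ∑ i, F (φ i) (ℓ - t i)

theorem superposition_mul_mul {n V : ℕ} {F : ℝ → ℤ × ℤ → ℝ} {g : ℤ → ℤ × ℤ → ℂ}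
    (hF : Steerable n V F g) {t : ι → ℤ × ℤ}
    (hsep : ∀ i j, i ≠ j → 4 * (n : ℤ) ≤ supNorm (t i - t j)) (φ : ι → ℝ) {x y z : ℤ × ℤ}
    (hxy : supNorm (x - y) < 2 * n) (hxz : supNorm (x - z) < 2 * n) :
    superposition F t φ x * superposition F t φ y * superposition F t φ z =
      ∑ i, F (φ i) (x - t i) * F (φ i) (y - t i) * F (φ i) (z - t i) := by
  have h {a b : ℤ × ℤ} (hab : supNorm (a - b) < 2 * n) (i j : ι) (hij : i ≠ j) :
      F (φ i) (a - t i) * F (φ j) (b - t j) = 0 :=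
    hF.mul_eq_zero_of_le_supNorm_sub _ _ (hsep i j hij) hab
  unfold superposition
  rw [Finset.sum_mul_sum_of_mul_eq_zero _ _ _ fun i _ j _ hij ↦ h hxy i j hij,
    Finset.sum_mul_sum_of_mul_eq_zero _ _ _ fun i _ j _ hij ↦ by
      rw [mul_right_comm, h hxz i j hij, zero_mul]]

theorem superposition_eq_zero_of_not_inGrid {n V N : ℕ} {F : ℝ → ℤ × ℤ → ℝ}
    {g : ℤ → ℤ × ℤ → ℂ} (hF : Steerable n V F g) {t : ι → ℤ × ℤ}
    (ht : ∀ i ℓ, supNorm (ℓ - t i) ≤ 3 * n → InGrid N ℓ)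
    (φ : ι → ℝ) {ℓ w : ℤ × ℤ} (hw : supNorm w ≤ 2 * n) (hℓ : ¬InGrid N (ℓ + w)) :
    superposition F t φ ℓ = 0 :=
  Finset.sum_eq_zero fun i _ ↦ by_contra fun h ↦ hℓ <| ht i _ <| by
    have := supNorm_add_le (ℓ - t i) w
    rw [sub_add_eq_add_sub] at this
    linarith [hF.supNorm_le_of_ne_zero h]

def uniformAngle : Measure ℝ := (ENNReal.ofReal (2 * π))⁻¹ • volume.restrict (Set.Ico 0 (2 * π))

def angularMean (f : ℝ → ℝ) : ℝ := 1 / (2 * π) * ∫ φ in (0 : ℝ)..(2 * π), f φ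

section Expectations

variable {Ω : Type*} {mΩ : MeasurableSpace Ω} {μ : Measure Ω}

variable {n V : ℕ} {F : ℝ → ℤ × ℤ → ℝ} {g : ℤ → ℤ × ℤ → ℂ}

theorem Steerable.memLp_comp [IsFiniteMeasure μ] (hF : Steerable n V F g) {X : Ω → ℝ}
    (hX : Measurable X) (ℓ : ℤ × ℤ) (q : ℝ≥0∞) : MemLp (fun ω ↦ F (X ω) ℓ) q μ :=
  MemLp.of_bound ((hF.continuous ℓ).measurable.comp hX).aestronglyMeasurable _
    (ae_of_all _ fun _ ↦ (Real.norm_eq_abs _).trans_le (hF.abs_le _ _))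

variable {θ : ι → Ω → ℝ}

theorem measurable_superposition {m : MeasurableSpace Ω} (hF : Steerable n V F g) (t : ι → ℤ × ℤ)
    (hθ : ∀ i, Measurable[m] (θ i)) (ℓ : ℤ × ℤ) :
    Measurable[m] fun ω ↦ superposition F t (θ · ω) ℓ :=
  Finset.measurable_sum _ fun i _ ↦ (hF.continuous _).measurable.comp (hθ i)

theorem memLp_superposition [IsFiniteMeasure μ] (hF : Steerable n V F g) (t : ι → ℤ × ℤ)
    (hθ : ∀ i, Measurable (θ i)) (ℓ : ℤ × ℤ) (q : ℝ≥0∞) :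
    MemLp (fun ω ↦ superposition F t (θ · ω) ℓ) q μ :=
  memLp_finsetSum _ fun i _ ↦ hF.memLp_comp (hθ i) _ q

theorem integral_superposition [IsFiniteMeasure μ] (hF : Steerable n V F g) (t : ι → ℤ × ℤ)
    (hθmeas : ∀ i, Measurable (θ i))
    (hθlaw : ∀ i, μ.map (θ i) = uniformAngle)
    (ℓ : ℤ × ℤ) :
    ∫ ω, superposition F t (θ · ω) ℓ ∂μ = ∑ i, angularMean fun φ ↦ F φ (ℓ - t i) := by
  unfold superposition
  rw [integral_finsetSum _ fun i _ ↦ memLp_one_iff_integrable.1 (hF.memLp_comp (hθmeas i) _ 1)]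
  exact Finset.sum_congr rfl fun i _ ↦ integral_comp_of_map_eq_uniform two_pi_pos.le
    (hθmeas i) (hθlaw i) (hF.continuous _).measurable

theorem integral_superposition_mul_mul [IsFiniteMeasure μ] (hF : Steerable n V F g)
    {t : ι → ℤ × ℤ} (hsep : ∀ i j, i ≠ j → 4 * (n : ℤ) ≤ supNorm (t i - t j))
    (hθmeas : ∀ i, Measurable (θ i))
    (hθlaw : ∀ i, μ.map (θ i) = uniformAngle)
    {x y z : ℤ × ℤ} (hxy : supNorm (x - y) < 2 * n) (hxz : supNorm (x - z) < 2 * n) :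
    ∫ ω, superposition F t (θ · ω) x * superposition F t (θ · ω) y *
        superposition F t (θ · ω) z ∂μ =
      ∑ i, angularMean fun φ ↦ F φ (x - t i) * F φ (y - t i) * F φ (z - t i) := by
  simp_rw [superposition_mul_mul hF hsep _ hxy hxz]
  rw [integral_finsetSum _ fun i _ ↦ integrable_mul_mul_of_memLp_three
    (hF.memLp_comp (hθmeas i) _ 3) (hF.memLp_comp (hθmeas i) _ 3) (hF.memLp_comp (hθmeas i) _ 3)]
  exact Finset.sum_congr rfl fun i _ ↦ integral_comp_of_map_eq_uniform two_pi_pos.le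
    (hθmeas i) (hθlaw i) (f := fun φ ↦ F φ (x - t i) * F φ (y - t i) * F φ (z - t i))
    ((((hF.continuous _).mul (hF.continuous _)).mul (hF.continuous _)).measurable)

end Expectations

theorem sum_grid_sum_sub_eq_card_mul_tsum {n N : ℕ} {t : ι → ℤ × ℤ}
    (ht : ∀ i ℓ, supNorm (ℓ - t i) ≤ 3 * n → InGrid N ℓ)
    {h : ℤ × ℤ → ℝ} (hh : ∀ ℓ, h ℓ ≠ 0 → supNorm ℓ ≤ n) {w : ℤ × ℤ} (hw : supNorm w ≤ 2 * n) :
    ∑ j ∈ grid N, ∑ i, h (j + w - t i) = Fintype.card ι * ∑' ℓ, h ℓ := by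
  have (i : ι) : ∑ j ∈ grid N, h (j + w - t i) = ∑' ℓ, h ℓ := by
    simp_rw [← sub_sub_eq_add_sub]
    refine Finset.sum_sub_eq_tsum _ fun ℓ hℓ ↦ mem_grid.2 (ht i _ ?_)
    have := supNorm_add_le ℓ (-w)
    rw [supNorm_neg] at this
    rw [show ℓ + (t i - w) - t i = ℓ + -w by abel]
    linarith [hh ℓ hℓ]
  rw [Finset.sum_comm]
  simp [this]

theorem angularMean_tsum {α : Type*} {f : ℝ → α → ℝ} (s : Finset α)
    (hs : ∀ φ, ∀ a ∉ s, f φ a = 0) (hf : ∀ a, Continuous (f · a)) :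
    angularMean (fun φ ↦ ∑' a, f φ a) = ∑' a, angularMean (f · a) := by
  rw [tsum_eq_sum (s := s) fun a ha ↦ by simp [angularMean, hs _ a ha]]
  simp_rw [tsum_eq_sum (hs _)]
  rw [angularMean, intervalIntegral.integral_finsetSum fun a _ ↦ (hf a).intervalIntegrable _ _,
    Finset.mul_sum]
  rfl

section Model

variable {Ω : Type*} {mΩ : MeasurableSpace Ω} {μ : Measure Ω} {n V N : ℕ} {σ : ℝ}
  {F : ℝ → ℤ × ℤ → ℝ} {g : ℤ → ℤ × ℤ → ℂ} {t : ι → ℤ × ℤ} {θ : ι → Ω → ℝ}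
  {ε : ℤ × ℤ → Ω → ℝ}

/-- Off the grid the noise vanishes, which is a centred Gaussian of variance `0`. -/
theorem hasLaw_noise [IsProbabilityMeasure μ] (hεmeas : ∀ ℓ, Measurable (ε ℓ))
    (hεdist : ∀ ℓ, InGrid N ℓ → μ.map (ε ℓ) = gaussianReal 0 (σ ^ 2).toNNReal)
    (hεzero : ∀ ℓ, ¬InGrid N ℓ → ε ℓ = 0) (ℓ : ℤ × ℤ) :
    HasLaw (ε ℓ) (gaussianReal 0 (if InGrid N ℓ then (σ ^ 2).toNNReal else 0)) μ := by
  split_ifs with h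
  · exact ⟨(hεmeas ℓ).aemeasurable, hεdist ℓ h⟩
  · rw [hεzero ℓ h, gaussianReal_zero_var]
    exact ⟨aemeasurable_const, by simp [Pi.zero_def, Measure.map_const]⟩

theorem measurement_eq_superposition_add_noise {M : Ω → ℤ × ℤ → ℝ} (hF : Steerable n V F g)
    (ht : ∀ i ℓ, supNorm (ℓ - t i) ≤ 3 * n → InGrid N ℓ)
    (hεzero : ∀ ℓ, ¬InGrid N ℓ → ε ℓ = 0)
    (hM : ∀ ω ℓ, M ω ℓ = if InGrid N ℓ then (∑ i, F (θ i ω) (ℓ - t i)) + ε ℓ ω else 0)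
    (ω : Ω) (ℓ : ℤ × ℤ) : M ω ℓ = superposition F t (θ · ω) ℓ + ε ℓ ω := by
  rw [hM]
  split_ifs with h
  · rfl
  · rw [hεzero ℓ h, superposition_eq_zero_of_not_inGrid hF ht _ (w := 0) (by simp [supNorm])
      (by simpa using h)]
    simp

theorem integral_superposition_add_noise_mul_mul [IsProbabilityMeasure μ]
    (hF : Steerable n V F g)
    (ht : ∀ i ℓ, supNorm (ℓ - t i) ≤ 3 * n → InGrid N ℓ)
    (hsep : ∀ i j, i ≠ j → 4 * (n : ℤ) ≤ supNorm (t i - t j))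
    (hθmeas : ∀ i, Measurable (θ i)) (hεmeas : ∀ ℓ, Measurable (ε ℓ))
    (hθlaw : ∀ i, μ.map (θ i) = uniformAngle)
    (hεlaw : ∀ ℓ, HasLaw (ε ℓ) (gaussianReal 0 (if InGrid N ℓ then (σ ^ 2).toNNReal else 0)) μ)
    (hind : iIndepFun (Sum.elim θ ε) μ) {u v : ℤ × ℤ} (hu : supNorm u < 2 * n)
    (hv : supNorm v < 2 * n) {j : ℤ × ℤ} (hj : InGrid N j) :
    ∫ ω, (superposition F t (θ · ω) j + ε j ω) *
        (superposition F t (θ · ω) (j + u) + ε (j + u) ω) *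
        (superposition F t (θ · ω) (j + v) + ε (j + v) ω) ∂μ =
      ∑ i, angularMean (fun φ ↦ F φ (j - t i) * F φ (j - t i + u) * F φ (j - t i + v)) +
        σ ^ 2 * ((if u = 0 then 1 else 0) * ∑ i, angularMean (F · (j + v - t i)) +
          (if v = 0 then 1 else 0) * ∑ i, angularMean (F · (j + u - t i)) +
          (if u - v = 0 then 1 else 0) * ∑ i, angularMean (F · (j - t i))) := by
  set S : ℤ × ℤ → Ω → ℝ := fun ℓ ω ↦ superposition F t (θ · ω) ℓ with hS
  have hεind : iIndepFun ε μ := iIndepFun.precomp (g := Sum.inr) Sum.inr_injective hind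
  have hcov := integral_mul_of_iIndepFun_gaussianReal hεind hεlaw
  have hθ (i : ι) : Measurable[⨆ i, MeasurableSpace.comap (θ i) inferInstance] (θ i) :=
    measurable_iff_comap_le.2 (le_iSup (fun i ↦ MeasurableSpace.comap (θ i) inferInstance) i)
  have hε (ℓ : ℤ × ℤ) : Measurable[⨆ ℓ, MeasurableSpace.comap (ε ℓ) inferInstance] (ε ℓ) :=
    measurable_iff_comap_le.2 (le_iSup (fun ℓ ↦ MeasurableSpace.comap (ε ℓ) inferInstance) ℓ)
  rw [integral_add_mul_add_mul_add_of_indep (iSup_le fun i ↦ (hθmeas i).comap_le)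
      (iSup_le fun ℓ ↦ (hεmeas ℓ).comap_le) (hind.indep_iSup_comap_sum_elim hθmeas hεmeas)
      (X := S) (measurable_superposition hF t hθ) hε
      (fun ℓ ↦ memLp_superposition hF t hθmeas ℓ 3) (fun ℓ ↦ (hεlaw ℓ).memLp_of_gaussianReal 3)
      (fun ℓ ↦ by rw [(hεlaw ℓ).integral_eq, integral_id_gaussianReal])
      (integral_mul_mul_of_iIndepFun_gaussianReal hεind hεlaw _ _ _), hcov, hcov, hcov]
  have hσ : (((σ ^ 2).toNNReal : ℝ≥0) : ℝ) = σ ^ 2 := Real.coe_toNNReal _ (sq_nonneg σ)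
  have h₁ : (∫ ω, S j ω ∂μ) * (if j + u = j + v then
      ((if InGrid N (j + u) then (σ ^ 2).toNNReal else 0 : ℝ≥0) : ℝ) else 0) =
      σ ^ 2 * (if u - v = 0 then 1 else 0) * ∫ ω, S j ω ∂μ := by
    by_cases huv : u = v
    · subst huv
      by_cases hg : InGrid N (j + u)
      · simp [hg, hσ, mul_comm]
      · simp [hS, superposition_eq_zero_of_not_inGrid hF ht _ hu.le hg]
    · simp [huv, sub_eq_zero]
  have h₂ (w : ℤ × ℤ) : (if j = j + w then
      ((if InGrid N j then (σ ^ 2).toNNReal else 0 : ℝ≥0) : ℝ) else 0) =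
      σ ^ 2 * (if w = 0 then 1 else 0) := by
    simp [hj, hσ, eq_comm (a := w)]
  rw [h₁, h₂, h₂, integral_superposition_mul_mul hF hsep hθmeas hθlaw
    (by rwa [sub_add_cancel_left, supNorm_neg]) (by rwa [sub_add_cancel_left, supNorm_neg]),
    integral_superposition hF t hθmeas hθlaw, integral_superposition hF t hθmeas hθlaw,
    integral_superposition hF t hθmeas hθlaw]
  simp_rw [sub_add_eq_add_sub]
  ring

theorem integral_sum_grid_superposition_add_noise [IsProbabilityMeasure μ]
    (hF : Steerable n V F g)
    (ht : ∀ i ℓ, supNorm (ℓ - t i) ≤ 3 * n → InGrid N ℓ)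
    (hsep : ∀ i j, i ≠ j → 4 * (n : ℤ) ≤ supNorm (t i - t j))
    (hθmeas : ∀ i, Measurable (θ i)) (hεmeas : ∀ ℓ, Measurable (ε ℓ))
    (hθlaw : ∀ i, μ.map (θ i) = uniformAngle)
    (hεlaw : ∀ ℓ, HasLaw (ε ℓ) (gaussianReal 0 (if InGrid N ℓ then (σ ^ 2).toNNReal else 0)) μ)
    (hind : iIndepFun (Sum.elim θ ε) μ) {u v : ℤ × ℤ} (hu : supNorm u < 2 * n)
    (hv : supNorm v < 2 * n) :
    ∫ ω, ∑ j ∈ grid N, (superposition F t (θ · ω) j + ε j ω) *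
        (superposition F t (θ · ω) (j + u) + ε (j + u) ω) *
        (superposition F t (θ · ω) (j + v) + ε (j + v) ω) ∂μ =
      Fintype.card ι * ∑' ℓ, angularMean (fun φ ↦ F φ ℓ * F φ (ℓ + u) * F φ (ℓ + v)) +
        Fintype.card ι * (∑' ℓ, angularMean (F · ℓ)) * σ ^ 2 *
          ((if u = 0 then 1 else 0) + (if v = 0 then 1 else 0) + (if u - v = 0 then 1 else 0)) := by
  have hL (ℓ : ℤ × ℤ) : MemLp (fun ω ↦ superposition F t (θ · ω) ℓ + ε ℓ ω) 3 μ :=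
    (memLp_superposition hF t hθmeas ℓ 3).add ((hεlaw ℓ).memLp_of_gaussianReal 3)
  have hsupp {f : ℤ × ℤ → ℝ → ℝ} (hf : ∀ ℓ φ, (n : ℤ) < supNorm ℓ → f ℓ φ = 0) (ℓ : ℤ × ℤ)
      (h : angularMean (f ℓ) ≠ 0) : supNorm ℓ ≤ n :=
    not_lt.1 fun h' ↦ h (by simp [angularMean, hf ℓ _ h'])
  have hmean (w : ℤ × ℤ) (hw : supNorm w ≤ 2 * n) :
      ∑ j ∈ grid N, ∑ i, angularMean (F · (j + w - t i)) =
        Fintype.card ι * ∑' ℓ, angularMean (F · ℓ) :=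
    sum_grid_sum_sub_eq_card_mul_tsum ht (hsupp fun ℓ φ h ↦ hF.eq_zero_of_lt_supNorm φ h) hw
  have htriple := sum_grid_sum_sub_eq_card_mul_tsum ht
    (hsupp (f := fun ℓ φ ↦ F φ ℓ * F φ (ℓ + u) * F φ (ℓ + v))
      fun ℓ φ h ↦ by simp [hF.eq_zero_of_lt_supNorm φ h]) (w := 0) (by simp [supNorm])
  have hmean₀ := hmean 0 (by simp [supNorm])
  simp only [add_zero] at htriple hmean₀
  rw [integral_finsetSum _ fun j _ ↦ integrable_mul_mul_of_memLp_three (hL j) (hL _) (hL _),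
    Finset.sum_congr rfl fun j hj ↦ integral_superposition_add_noise_mul_mul hF ht hsep hθmeas
      hεmeas hθlaw hεlaw hind hu hv (mem_grid.1 hj)]
  simp only [Finset.sum_add_distrib, ← Finset.mul_sum]
  rw [htriple, hmean₀, hmean u hu.le, hmean v hv.le]
  ring

end Model

theorem stmt_15_general {Ω : Type} [MeasureSpace Ω] [IsProbabilityMeasure (ℙ : Measure Ω)]
    (n V N p : ℕ) (hn : 1 ≤ n)
    (σ : ℝ)
    (F : ℝ → ℤ × ℤ → ℝ) (g : ℤ → ℤ × ℤ → ℂ) (hF : Steerable n V F g)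
    (t : Fin p → ℤ × ℤ)
    (ht : ∀ i : Fin p,
      (3 * n : ℤ) ≤ (t i).1 ∧ (t i).1 ≤ (N : ℤ) - 3 * n - 1 ∧
      (3 * n : ℤ) ≤ (t i).2 ∧ (t i).2 ≤ (N : ℤ) - 3 * n - 1)
    (hsep : ∀ i j : Fin p, i ≠ j →
      (4 * n : ℤ) ≤ max |(t i).1 - (t j).1| |(t i).2 - (t j).2|)
    (θ : Fin p → Ω → ℝ) (ε : ℤ × ℤ → Ω → ℝ)
    (hθmeas : ∀ i : Fin p, Measurable (θ i))
    (hεmeas : ∀ ℓ : ℤ × ℤ, Measurable (ε ℓ))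
    (hθdist : ∀ i : Fin p,
      Measure.map (θ i) ℙ =
        (ENNReal.ofReal (2 * π))⁻¹ • (volume.restrict (Set.Ico (0 : ℝ) (2 * π))))
    (hεdist : ∀ ℓ : ℤ × ℤ, InGrid N ℓ →
      Measure.map (ε ℓ) ℙ = gaussianReal 0 (σ ^ 2).toNNReal)
    (hεzero : ∀ ℓ : ℤ × ℤ, ¬InGrid N ℓ → ε ℓ = 0)
    (hindep : iIndepFun (m := fun _ : Fin p ⊕ (ℤ × ℤ) => (inferInstance : MeasurableSpace ℝ))
      (Sum.elim θ ε) ℙ)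
    (M : Ω → ℤ × ℤ → ℝ)
    (hM : ∀ ω : Ω, ∀ ℓ : ℤ × ℤ,
      M ω ℓ = if InGrid N ℓ then (∑ i : Fin p, F (θ i ω) (ℓ - t i)) + ε ℓ ω else 0) :
    ∀ u v : ℤ × ℤ,
      (0 ≤ u.1 ∧ u.1 ≤ 2 * (n : ℤ) - 1 ∧ 0 ≤ u.2 ∧ u.2 ≤ 2 * (n : ℤ) - 1) →
      (0 ≤ v.1 ∧ v.1 ≤ 2 * (n : ℤ) - 1 ∧ 0 ≤ v.2 ∧ v.2 ≤ 2 * (n : ℤ) - 1) →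
      ∫ ω, (1 / (N : ℝ) ^ 2 * ∑' j : ℤ × ℤ, M ω j * M ω (j + u) * M ω (j + v)) ∂ℙ =
        (4 * (p : ℝ) * (n : ℝ) ^ 2 / (N : ℝ) ^ 2) *
          (1 / (4 * (n : ℝ) ^ 2) *
            (1 / (2 * π) *
              ∫ φ in (0:ℝ)..(2 * π), ∑' ℓ : ℤ × ℤ, F φ ℓ * F φ (ℓ + u) * F φ (ℓ + v))) +
        (4 * (p : ℝ) * (n : ℝ) ^ 2 / (N : ℝ) ^ 2) *
          (1 / (4 * (n : ℝ) ^ 2) *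
            (1 / (2 * π) * ∫ φ in (0:ℝ)..(2 * π), ∑' ℓ : ℤ × ℤ, F φ ℓ)) *
          σ ^ 2 *
          ((if u = 0 then 1 else 0) + (if v = 0 then 1 else 0) +
            (if u - v = 0 then 1 else 0)) := by
  intro u v hu hv
  have hu' : supNorm u < 2 * n := by simp only [supNorm, max_lt_iff, abs_lt]; omega
  have hv' : supNorm v < 2 * n := by simp only [supNorm, max_lt_iff, abs_lt]; omega
  have ht' (i : Fin p) (ℓ : ℤ × ℤ) : supNorm (ℓ - t i) ≤ 3 * n → InGrid N ℓ :=
    inGrid_of_supNorm_sub_le (ht i)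
  have hA (ω : Ω) : ∑' j, M ω j * M ω (j + u) * M ω (j + v) =
      ∑ j ∈ grid N, (superposition F t (θ · ω) j + ε j ω) *
        (superposition F t (θ · ω) (j + u) + ε (j + u) ω) *
        (superposition F t (θ · ω) (j + v) + ε (j + v) ω) := by
    rw [tsum_eq_sum fun j hj ↦ by rw [hM, if_neg (mt mem_grid.2 hj), zero_mul, zero_mul]]
    simp only [measurement_eq_superposition_add_noise hF ht' hεzero hM ω]
  simp_rw [hA]
  rw [MeasureTheory.integral_const_mul, integral_sum_grid_superposition_add_noise hF ht' hsep
    hθmeas hεmeas hθdist (hasLaw_noise hεmeas hεdist hεzero) hindep hu' hv',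
    ← angularMean_tsum (f := fun φ ℓ ↦ F φ ℓ * F φ (ℓ + u) * F φ (ℓ + v)) (box n)
      (fun φ ℓ h ↦ by simp [hF.eq_zero_of_notMem_box φ h])
      fun ℓ ↦ ((hF.continuous _).mul (hF.continuous _)).mul (hF.continuous _),
    ← angularMean_tsum (box n) (fun φ ℓ h ↦ hF.eq_zero_of_notMem_box φ h) hF.continuous]
  have : (n : ℝ) ≠ 0 := Nat.cast_ne_zero.2 (by omega)
  simp only [angularMean, Fintype.card_fin]
  field_simp

/-- in the well-separated multi-target detection measurement model
(translations in `{3n,…,N−3n−1}²`, `N > 6n`), the expected third-order autocorrelation of the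
measurement satisfies `E[A³_M[u,v]] = γ·S₃[u,v] + γ·S₁·σ²·(δ[u]+δ[v]+δ[u−v])` for
`u, v ∈ L = {0,…,2n−1}²`. -/
theorem stmt_15 {Ω : Type} [MeasureSpace Ω] [IsProbabilityMeasure (ℙ : Measure Ω)]
    (n V N p : ℕ) (hn : 1 ≤ n) (hV : 1 ≤ V) (hN : 6 * n < N) (hp : 1 ≤ p)
    (σ : ℝ) (hσ : 0 ≤ σ)
    (F : ℝ → ℤ × ℤ → ℝ) (g : ℤ → ℤ × ℤ → ℂ) (hF : Steerable n V F g)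
    (t : Fin p → ℤ × ℤ)
    (ht : ∀ i : Fin p,
      (3 * n : ℤ) ≤ (t i).1 ∧ (t i).1 ≤ (N : ℤ) - 3 * n - 1 ∧
      (3 * n : ℤ) ≤ (t i).2 ∧ (t i).2 ≤ (N : ℤ) - 3 * n - 1)
    (hsep : ∀ i j : Fin p, i ≠ j →
      (4 * n : ℤ) ≤ max |(t i).1 - (t j).1| |(t i).2 - (t j).2|)
    (θ : Fin p → Ω → ℝ) (ε : ℤ × ℤ → Ω → ℝ)
    (hθmeas : ∀ i : Fin p, Measurable (θ i))
    (hεmeas : ∀ ℓ : ℤ × ℤ, Measurable (ε ℓ))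
    (hθdist : ∀ i : Fin p,
      Measure.map (θ i) ℙ =
        (ENNReal.ofReal (2 * π))⁻¹ • (volume.restrict (Set.Ico (0 : ℝ) (2 * π))))
    (hεdist : ∀ ℓ : ℤ × ℤ, InGrid N ℓ →
      Measure.map (ε ℓ) ℙ = gaussianReal 0 (σ ^ 2).toNNReal)
    (hεzero : ∀ ℓ : ℤ × ℤ, ¬InGrid N ℓ → ε ℓ = 0)
    (hindep : iIndepFun (m := fun _ : Fin p ⊕ (ℤ × ℤ) => (inferInstance : MeasurableSpace ℝ))
      (Sum.elim θ ε) ℙ)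
    (M : Ω → ℤ × ℤ → ℝ)
    (hM : ∀ ω : Ω, ∀ ℓ : ℤ × ℤ,
      M ω ℓ = if InGrid N ℓ then (∑ i : Fin p, F (θ i ω) (ℓ - t i)) + ε ℓ ω else 0) :
    ∀ u v : ℤ × ℤ,
      (0 ≤ u.1 ∧ u.1 ≤ 2 * (n : ℤ) - 1 ∧ 0 ≤ u.2 ∧ u.2 ≤ 2 * (n : ℤ) - 1) →
      (0 ≤ v.1 ∧ v.1 ≤ 2 * (n : ℤ) - 1 ∧ 0 ≤ v.2 ∧ v.2 ≤ 2 * (n : ℤ) - 1) →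
      ∫ ω, (1 / (N : ℝ) ^ 2 * ∑' j : ℤ × ℤ, M ω j * M ω (j + u) * M ω (j + v)) ∂ℙ =
        (4 * (p : ℝ) * (n : ℝ) ^ 2 / (N : ℝ) ^ 2) *
          (1 / (4 * (n : ℝ) ^ 2) *
            (1 / (2 * π) *
              ∫ φ in (0:ℝ)..(2 * π), ∑' ℓ : ℤ × ℤ, F φ ℓ * F φ (ℓ + u) * F φ (ℓ + v))) +
        (4 * (p : ℝ) * (n : ℝ) ^ 2 / (N : ℝ) ^ 2) *
          (1 / (4 * (n : ℝ) ^ 2) *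
            (1 / (2 * π) * ∫ φ in (0:ℝ)..(2 * π), ∑' ℓ : ℤ × ℤ, F φ ℓ)) *
          σ ^ 2 *
          ((if u = 0 then 1 else 0) + (if v = 0 then 1 else 0) +
            (if u - v = 0 then 1 else 0)) :=
  stmt_15_general n V N p hn σ F g hF t ht hsep θ ε hθmeas hεmeas hθdist hεdist hεzero hindep M hM
end
end
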